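/- arXiv:2412.14781 — 8 statements merged into one kernel-verified Lean document; each statement's English description precedes it below -/
import Mathlib

section
/- For all u, u' ∈ Ω_β one has ‖S(u) − S(u')‖² ≥ σ‖u − u'‖², where ‖·‖ is the Euclidean norm on ℝ^k. (Proposition 3.1, 'dilatance': the auxiliary map S is uniformly expanding with factor √σ.) -/
/-!
Write `v = u - u'`. The first `k - 1` coordinates of `S u - S u'` are `v₂/γ, …, v_k/γ`, which
contribute `C₁σ (v₂² + ⋯ + v_k²)` since `γ⁻² = C₁σ`. By the mean value theorem on the convex cube
containing `Γ(Ω_β)`, the last coordinate is `a + b` with `a = γ^(k-1) ∂₁Φ₀(ξ) v₁` and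
`b = Σ_{j ≥ 2} γ^(k-j) ∂ⱼΦ₀(ξ) vⱼ`. The bound on `∂₁Φ₀` gives `a² ≥ C₂σ v₁²`; the weights
`γ^(k-j)` are at most `1`, so Cauchy–Schwarz gives `b² ≤ (C₁-1)(C₂-1)σ (v₂² + ⋯ + v_k²)`.
Young's inequality `(a + b)² ≥ a²/C₂ - b²/(C₂-1)` then yields the claim.
-/

open Finset

lemma le_sq_add_of_mul_le_sq {a b y M C : ℝ} (hC : 1 < C) (ha : C * y ≤ a ^ 2)
    (hb : b ^ 2 ≤ (C - 1) * M) : y ≤ (a + b) ^ 2 + M := by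
  have hC0 : 0 < C * (C - 1) := by nlinarith
  have hyoung : (C - 1) * a ^ 2 ≤ C * (C - 1) * (a + b) ^ 2 + C * b ^ 2 := by
    nlinarith [sq_nonneg ((C - 1) * (a + b) + b)]
  nlinarith

lemma sq_sum_mul_le_of_sq_le {ι : Type*} (s : Finset ι) (c w : ι → ℝ) {M : ℝ}
    (hc : ∀ i ∈ s, c i ^ 2 ≤ M / #s) : (∑ i ∈ s, c i * w i) ^ 2 ≤ M * ∑ i ∈ s, w i ^ 2 := by
  rcases s.eq_empty_or_nonempty with rfl | hs
  · simp
  have hc_sum : ∑ i ∈ s, c i ^ 2 ≤ M := by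
    calc ∑ i ∈ s, c i ^ 2 ≤ #s • (M / #s) := sum_le_card_nsmul _ _ _ hc
      _ = M := by rw [nsmul_eq_mul]; field_simp [hs.card_pos.ne']
  calc (∑ i ∈ s, c i * w i) ^ 2 ≤ (∑ i ∈ s, c i ^ 2) * ∑ i ∈ s, w i ^ 2 :=
        sum_mul_sq_le_sq_mul_sq s c w
    _ ≤ M * ∑ i ∈ s, w i ^ 2 := by gcongr

lemma mul_sq_add_sum_sq_le_add_sq {ι : Type*} [Fintype ι] {σ C₁ C₂ a x : ℝ} (hC₂ : 1 < C₂)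
    (c v : ι → ℝ) (ha : C₂ * σ * x ^ 2 ≤ a ^ 2)
    (hc : ∀ i, c i ^ 2 ≤ (C₁ - 1) * (C₂ - 1) * σ / Fintype.card ι) :
    σ * (x ^ 2 + ∑ i, v i ^ 2) ≤ C₁ * σ * ∑ i, v i ^ 2 + (a + ∑ i, c i * v i) ^ 2 := by
  have hb := sq_sum_mul_le_of_sq_le univ c v fun i _ => hc i
  have := le_sq_add_of_mul_le_sq (a := a) (b := ∑ i, c i * v i) (y := σ * x ^ 2)
    (M := (C₁ - 1) * σ * ∑ i, v i ^ 2) hC₂ (by linarith) (by linarith)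
  linarith

lemma convex_setOf_forall_mem_Ioo {ι : Type*} [Fintype ι] (a b : ℝ) :
    Convex ℝ {x : EuclideanSpace ℝ ι | ∀ j, x j ∈ Set.Ioo a b} :=
  fun x hx y hy p q hp hq hpq j => by
    simpa using convex_Ioo a b (hx j) (hy j) hp hq hpq

lemma isOpen_setOf_forall_mem_Ioo {ι : Type*} [Fintype ι] (a b : ℝ) :
    IsOpen {x : EuclideanSpace ℝ ι | ∀ j, x j ∈ Set.Ioo a b} := by
  rw [Set.ofPred_forall]
  exact isOpen_iInter_of_finite fun j => isOpen_Ioo.preimage (EuclideanSpace.proj j).continuous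

lemma abs_zpow_neg_mul_lt {γ c x : ℝ} (hγ : 0 < γ) (j : ℕ) (h : |x| < γ ^ j * c) :
    |γ ^ (-(j : ℤ)) * x| < c := by
  rwa [abs_mul, abs_of_pos (zpow_pos hγ _), zpow_neg, zpow_natCast,
    inv_mul_lt_iff₀ (pow_pos hγ j)]

lemma Convex.exists_sub_eq_fderiv_apply {E : Type*} [NormedAddCommGroup E] [NormedSpace ℝ E]
    {f : E → ℝ} {s : Set E} (hs : Convex ℝ s) (ho : IsOpen s) (hf : DifferentiableOn ℝ f s)
    {x y : E} (hx : x ∈ s) (hy : y ∈ s) : ∃ ξ ∈ s, f y - f x = fderiv ℝ f ξ (y - x) := by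
  obtain ⟨ξ, hξ, h⟩ := domain_mvt
    (fun z hz => ((hf z hz).differentiableAt (ho.mem_nhds hz)).hasFDerivAt.hasFDerivWithinAt)
    hs hx hy
  exact ⟨ξ, hs.segment_subset hx hy hξ, h⟩

lemma EuclideanSpace.clm_apply_eq_sum {ι : Type*} [Fintype ι] [DecidableEq ι]
    (φ : EuclideanSpace ℝ ι →L[ℝ] ℝ) (w : EuclideanSpace ℝ ι) :
    φ w = ∑ j, w j * φ (EuclideanSpace.single j 1) := by
  conv_lhs => rw [← (EuclideanSpace.basisFun ι ℝ).sum_repr w]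
  simp [map_sum]

lemma rpow_neg_half_sq {x : ℝ} (hx : 0 ≤ x) : (x ^ (-(1 : ℝ) / 2)) ^ 2 = x⁻¹ := by
  rw [← Real.rpow_natCast, ← Real.rpow_mul hx]
  norm_num [Real.rpow_neg_one]

lemma sq_pow_mul_zpow_neg_le_one {γ : ℝ} (hγ0 : 0 < γ) (hγ1 : γ ≤ 1) {i m : ℕ} (h : i ≤ m) :
    (γ ^ m * γ ^ (-(i : ℤ))) ^ 2 ≤ 1 := by
  rw [← zpow_natCast γ m, ← zpow_add₀ hγ0.ne']
  exact pow_le_one₀ (zpow_nonneg hγ0.le _) (zpow_le_one₀ hγ0 hγ1 (by omega))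

lemma mul_sq_le_sq_pow_mul {n : ℕ} {σ C₁ C₂ γ g x : ℝ} (hC₁σ : 0 < C₁ * σ)
    (hγ : γ ^ 2 = (C₁ * σ)⁻¹) (hg : C₁ ^ (n + 1) * C₂ * σ ^ (n + 2) ≤ g ^ 2) :
    C₂ * σ * x ^ 2 ≤ (γ ^ (n + 1) * g * x) ^ 2 := by
  have hcancel : ((C₁ * σ)⁻¹) ^ (n + 1) * (C₁ ^ (n + 1) * C₂ * σ ^ (n + 2)) = C₂ * σ := by
    calc ((C₁ * σ)⁻¹) ^ (n + 1) * (C₁ ^ (n + 1) * C₂ * σ ^ (n + 2))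
        = ((C₁ * σ) ^ (n + 1))⁻¹ * (C₁ * σ) ^ (n + 1) * (C₂ * σ) := by ring
      _ = C₂ * σ := by rw [inv_mul_cancel₀ (pow_pos hC₁σ _).ne', one_mul]
  calc C₂ * σ * x ^ 2
      = ((C₁ * σ)⁻¹) ^ (n + 1) * (C₁ ^ (n + 1) * C₂ * σ ^ (n + 2)) * x ^ 2 := by rw [hcancel]
    _ ≤ ((C₁ * σ)⁻¹) ^ (n + 1) * g ^ 2 * x ^ 2 := by gcongr
    _ = (γ ^ (n + 1) * g * x) ^ 2 := by rw [← hγ]; ring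

theorem mul_sum_sq_le_sum_div_sq_add_sq {n : ℕ} {σ C₁ C₂ γ : ℝ} (hC₁σ : 0 < C₁ * σ)
    (hC₂ : 1 < C₂) (hγ0 : 0 < γ) (hγ1 : γ ≤ 1) (hγ : γ ^ 2 = (C₁ * σ)⁻¹) (g v : Fin (n + 2) → ℝ)
    (hg0 : C₁ ^ (n + 1) * C₂ * σ ^ (n + 2) ≤ g 0 ^ 2)
    (hg : ∀ j : Fin (n + 1), g j.succ ^ 2 ≤ (C₁ - 1) * (C₂ - 1) * σ / (n + 1)) :
    σ * ∑ j, v j ^ 2 ≤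
      ∑ j : Fin (n + 1), (v j.succ / γ) ^ 2 +
        (γ ^ (n + 1) * ∑ j : Fin (n + 2), γ ^ (-((j : ℕ) : ℤ)) * v j * g j) ^ 2 := by
  have hshift : ∑ j : Fin (n + 1), (v j.succ / γ) ^ 2 =
      C₁ * σ * ∑ j : Fin (n + 1), v j.succ ^ 2 := by
    rw [mul_sum]
    congr 1 with j
    rw [div_pow, hγ, div_inv_eq_mul, mul_comm]
  have hsplit : γ ^ (n + 1) * ∑ j : Fin (n + 2), γ ^ (-((j : ℕ) : ℤ)) * v j * g j =
      γ ^ (n + 1) * g 0 * v 0 +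
        ∑ j : Fin (n + 1), γ ^ (n + 1) * γ ^ (-((j + 1 : ℕ) : ℤ)) * g j.succ * v j.succ := by
    rw [Fin.sum_univ_succ, mul_add, mul_sum]
    simp only [Fin.val_zero, CharP.cast_eq_zero, neg_zero, zpow_zero, Fin.val_succ]
    congr 1
    · ring
    · exact sum_congr rfl fun j _ => by ring
  rw [Fin.sum_univ_succ, hshift, hsplit]
  refine mul_sq_add_sum_sq_le_add_sq hC₂ _ _ (mul_sq_le_sq_pow_mul hC₁σ hγ hg0) fun j => ?_
  calc (γ ^ (n + 1) * γ ^ (-((j + 1 : ℕ) : ℤ)) * g j.succ) ^ 2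
      = (γ ^ (n + 1) * γ ^ (-((j + 1 : ℕ) : ℤ))) ^ 2 * g j.succ ^ 2 := by ring
    _ ≤ 1 * g j.succ ^ 2 := by
        gcongr
        exact sq_pow_mul_zpow_neg_le_one hγ0 hγ1 (by omega)
    _ ≤ _ := by simpa using hg j

/-- **Proposition `dilatance`.** Under the quantitative conditions on `Φ₀` and with
`γ = (C₁σ)^(−1/2)`, the auxiliary map `S` satisfies `‖S u − S u'‖² ≥ σ‖u − u'‖²`
for all `u, u' ∈ Ω_β` (Euclidean norm on `ℝ^k`). -/
theorem dilatance (k : ℕ) (hk : 2 ≤ k)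
    (L β σ C₁ C₂ : ℝ)
    (hσ : 1 < σ) (hC₁ : 1 < C₁) (hC₂ : 1 < C₂)
    (γ : ℝ) (hγ : γ = (C₁ * σ) ^ (-(1 : ℝ) / 2))
    (Φ₀ : EuclideanSpace ℝ (Fin k) → ℝ)
    (cube : Set (EuclideanSpace ℝ (Fin k)))
    (hcube : cube = {x | ∀ j : Fin k, -(L + β) < x j ∧ x j < L + β})
    (hΦ : ContDiffOn ℝ 2 Φ₀ cube)
    (hd1 : ∀ x ∈ cube,
      C₁ ^ (k - 1) * C₂ * σ ^ k
        ≤ (fderiv ℝ Φ₀ x (EuclideanSpace.single (⟨0, by omega⟩ : Fin k) 1)) ^ 2)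
    (hdj : ∀ x ∈ cube, ∀ j : Fin k, 1 ≤ (j : ℕ) →
      (fderiv ℝ Φ₀ x (EuclideanSpace.single j 1)) ^ 2 ≤ (C₁ - 1) * (C₂ - 1) * σ / (k - 1))
    (Γ : EuclideanSpace ℝ (Fin k) → EuclideanSpace ℝ (Fin k))
    (hΓ : ∀ x (j : Fin k), Γ x j = γ ^ (-((j : ℕ) : ℤ)) * x j)
    (Ωβ : Set (EuclideanSpace ℝ (Fin k)))
    (hΩβ : Ωβ = {u | ∀ j : Fin k, |u j| < γ ^ (j : ℕ) * (L + β)})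
    (S : EuclideanSpace ℝ (Fin k) → EuclideanSpace ℝ (Fin k))
    (hS : ∀ u (i : Fin k),
      (∀ h : (i : ℕ) + 1 < k, S u i = u ⟨(i : ℕ) + 1, h⟩ / γ) ∧
      ((i : ℕ) = k - 1 → S u i = γ ^ (k - 1) * Φ₀ (Γ u))) :
    ∀ u ∈ Ωβ, ∀ u' ∈ Ωβ, σ * ‖u - u'‖ ^ 2 ≤ ‖S u - S u'‖ ^ 2 := by
  obtain ⟨n, rfl⟩ : ∃ n, k = n + 2 := ⟨k - 2, by omega⟩
  rintro u hu u' hu'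
  have hC₁σ : 1 < C₁ * σ := one_lt_mul_of_lt_of_le hC₁ hσ.le
  have hγ0 : 0 < γ := hγ ▸ by positivity
  have hγ1 : γ ≤ 1 := hγ ▸ Real.rpow_le_one_of_one_le_of_nonpos hC₁σ.le (by norm_num)
  have hγsq : γ ^ 2 = (C₁ * σ)⁻¹ := hγ ▸ rpow_neg_half_sq (by positivity)
  have hΓ_mem : ∀ w ∈ Ωβ, Γ w ∈ cube := by
    subst hΩβ hcube
    exact fun w hw j => abs_lt.mp (hΓ w j ▸ abs_zpow_neg_mul_lt hγ0 j (hw j))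
  obtain ⟨ξ, hξ, hmvt⟩ := (hcube ▸ convex_setOf_forall_mem_Ioo _ _).exists_sub_eq_fderiv_apply
    (hcube ▸ isOpen_setOf_forall_mem_Ioo _ _) (hΦ.differentiableOn two_ne_zero)
    (hΓ_mem u' hu') (hΓ_mem u hu)
  have hlast : (S u - S u') (Fin.last (n + 1)) = γ ^ (n + 1) *
      ∑ j : Fin (n + 2),
        γ ^ (-((j : ℕ) : ℤ)) * (u - u') j * fderiv ℝ Φ₀ ξ (EuclideanSpace.single j 1) := by
    rw [PiLp.sub_apply, (hS u _).2 (by simp), (hS u' _).2 (by simp), ← mul_sub, hmvt,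
      EuclideanSpace.clm_apply_eq_sum]
    simp only [PiLp.sub_apply, hΓ, ← mul_sub]
    rfl
  have hinit : ∀ j : Fin (n + 1), (S u - S u') j.castSucc = (u - u') j.succ / γ := fun j => by
    rw [PiLp.sub_apply, (hS u _).1 (by simp; omega), (hS u' _).1 (by simp; omega),
      PiLp.sub_apply, sub_div]
    rfl
  rw [EuclideanSpace.real_norm_sq_eq, EuclideanSpace.real_norm_sq_eq,
    Fin.sum_univ_castSucc (fun i => (S u - S u') i ^ 2), hlast]
  simp only [hinit]
  refine mul_sum_sq_le_sum_div_sq_add_sq (by positivity) hC₂ hγ0 hγ1 hγsq _ _ ?_ fun j => ?_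
  · exact hd1 ξ hξ
  · convert hdj ξ hξ j.succ (by simp) using 2
    push_cast
    ring
end

section
/- The following hold: (1) the eigenspace of B associated with the value γ^(−2) is exactly { (0, X) ∈ ℝ × ℝ^(k−1) : ⟨X, V⟩ = 0 }, a subspace of dimension k − 2 (so for k ≥ 3, γ^(−2) is an eigenvalue of B of geometric multiplicity k − 2); (2) setting Δ = (γ^(−2) + v₁² + ‖V‖²)² − 4 v₁² γ^(−2), one has Δ > 0, and the two distinct real numbers λ₋ = (γ^(−2) + v₁² + ‖V‖² − √Δ)/2 and λ₊ = (γ^(−2) + v₁² + ‖V‖² + √Δ)/2 are nonzero simple eigenvalues of B, distinct from γ^(−2), with respective eigenvectors (t₋, V) and (t₊, V), where t₊ = (1 − γ^(−2)/λ₊)·v₁ and t₋ = (1 − γ^(−2)/λ₋)·v₁. (Lemma 'matrice'.) -/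
/-!
Write `c = γ⁻²`, `a = v₁` and split a vector as `(x, X)`. Then `B (x, X) = (a s, c X + s V)` with
`s = a x + ⟨V, X⟩`. For the eigenvalue `c`, the second component gives `s V = 0`, so `s = 0`,
whence `x = 0` and `⟨V, X⟩ = 0`. For an eigenvalue `μ ∉ {0, c}`, `X` is a multiple of `V` and `x`
is determined by `s`, so the eigenspace lies on the line through `((1 - c/μ) a, V)`; this vector
is an eigenvector exactly when `μ² - (c + a² + ‖V‖²) μ + c a² = 0`, whose roots are `λ±`. The
discriminant equals `(c + ‖V‖² - a²)² + 4 a² ‖V‖² > 0`, and both roots are positive since their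
sum `c + a² + ‖V‖²` and their product `c a²` are.
-/

open Matrix Module Module.End

section RankOneUpdate

variable {K : Type*} [Field K] {n : ℕ}

def tailDiagAddRankOne (c a : K) (V : Fin n → K) : Matrix (Fin (n + 1)) (Fin (n + 1)) K :=
  c • diagonal (fun i : Fin (n + 1) => if (i : ℕ) = 0 then (0 : K) else 1)
    + vecMulVec (Fin.cons a V) (Fin.cons a V)

variable {c a : K} {V : Fin n → K}

theorem tailDiagAddRankOne_mulVec_cons (x : K) (X : Fin n → K) :
    tailDiagAddRankOne c a V *ᵥ Fin.cons x X
      = Fin.cons (a * (a * x + V ⬝ᵥ X)) (c • X + (a * x + V ⬝ᵥ X) • V) := by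
  ext i
  cases i using Fin.cases <;>
    simp [tailDiagAddRankOne, add_mulVec, smul_mulVec, mulVec_diagonal, vecMulVec_mulVec,
      Fin.sum_univ_succ, dotProduct, mul_comm]

theorem cons_mem_eigenspace_tailDiagAddRankOne_iff (μ x : K) (X : Fin n → K) :
    (Fin.cons x X : Fin (n + 1) → K) ∈ eigenspace (toLin' (tailDiagAddRankOne c a V)) μ
      ↔ a * (a * x + V ⬝ᵥ X) = μ * x ∧ c • X + (a * x + V ⬝ᵥ X) • V = μ • X := by
  have hsmul : μ • (Fin.cons x X : Fin (n + 1) → K) = Fin.cons (μ * x) (μ • X) := smul_cons μ x X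
  rw [mem_eigenspace_iff, toLin'_apply, tailDiagAddRankOne_mulVec_cons, hsmul, Fin.cons_inj]

theorem mem_eigenspace_tailDiagAddRankOne_self_iff (hc : c ≠ 0) (hV : V ≠ 0)
    (v : Fin (n + 1) → K) :
    v ∈ eigenspace (toLin' (tailDiagAddRankOne c a V)) c ↔ v 0 = 0 ∧ Fin.tail v ⬝ᵥ V = 0 := by
  obtain ⟨x, X, rfl⟩ : ∃ x X, v = Fin.cons x X := ⟨v 0, Fin.tail v, (Fin.cons_self_tail v).symm⟩
  rw [cons_mem_eigenspace_tailDiagAddRankOne_iff, Fin.cons_zero, Fin.tail_cons,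
    dotProduct_comm X V]
  constructor
  · rintro ⟨hx, hX⟩
    have hs : a * x + V ⬝ᵥ X = 0 := (smul_eq_zero.mp (add_eq_left.mp hX)).resolve_right hV
    rw [hs, mul_zero, zero_eq_mul] at hx
    have hx0 := hx.resolve_left hc
    rw [hx0, mul_zero, zero_add] at hs
    exact ⟨hx0, hs⟩
  · rintro ⟨rfl, hX⟩
    simp [hX]

theorem finrank_eigenspace_tailDiagAddRankOne_self (hc : c ≠ 0) (hV : V ≠ 0) :
    finrank K (eigenspace (toLin' (tailDiagAddRankOne c a V)) c) = n - 1 := by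
  let L : (Fin (n + 1) → K) →ₗ[K] K × K :=
    (LinearMap.proj 0).prod (dotProductBilin K K V ∘ₗ LinearMap.funLeft K K Fin.succ)
  have hker : eigenspace (toLin' (tailDiagAddRankOne c a V)) c = LinearMap.ker L := by
    ext v
    rw [mem_eigenspace_tailDiagAddRankOne_self_iff hc hV, LinearMap.mem_ker, dotProduct_comm]
    exact Prod.mk_eq_zero.symm
  obtain ⟨j, hj⟩ : ∃ j, V j ≠ 0 := Function.ne_iff.mp hV
  have hsurj : LinearMap.range L = ⊤ := by
    refine LinearMap.range_eq_top.mpr fun ⟨y, z⟩ => ⟨Fin.cons y (Pi.single j (z / V j)), ?_⟩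
    exact Prod.ext rfl ((dotProduct_single V _ j).trans (mul_div_cancel₀ z hj))
  have hrank := L.finrank_range_add_finrank_ker
  rw [hsurj, finrank_top, ← hker] at hrank
  simp only [finrank_prod, finrank_self, finrank_fin_fun] at hrank
  omega

theorem hasEigenvector_tailDiagAddRankOne_cons (hV : V ≠ 0) {μ : K} (hμ : μ ≠ 0)
    (hroot : μ ^ 2 - (c + a ^ 2 + V ⬝ᵥ V) * μ + c * a ^ 2 = 0) :
    HasEigenvector (toLin' (tailDiagAddRankOne c a V)) μ (Fin.cons ((1 - c / μ) * a) V) := by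
  have hs : a * ((1 - c / μ) * a) + V ⬝ᵥ V = μ - c := by
    field_simp
    linear_combination -hroot
  refine hasEigenvector_iff.mpr ⟨(cons_mem_eigenspace_tailDiagAddRankOne_iff _ _ _).mpr ?_,
    fun h => hV (cons_eq_zero_iff.mp h).2⟩
  rw [hs, ← add_smul, add_sub_cancel]
  refine ⟨?_, rfl⟩
  field_simp

theorem eigenspace_tailDiagAddRankOne_le_span_cons {μ : K} (hμ : μ ≠ 0) (hμc : μ ≠ c) :
    eigenspace (toLin' (tailDiagAddRankOne c a V)) μ ≤ K ∙ Fin.cons ((1 - c / μ) * a) V := by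
  intro v hv
  obtain ⟨x, X, rfl⟩ : ∃ x X, v = Fin.cons x X := ⟨v 0, Fin.tail v, (Fin.cons_self_tail v).symm⟩
  obtain ⟨hx, hX⟩ := (cons_mem_eigenspace_tailDiagAddRankOne_iff _ _ _).mp hv
  set s := a * x + V ⬝ᵥ X
  have hμc' : μ - c ≠ 0 := sub_ne_zero.mpr hμc
  have hX' : X = (s / (μ - c)) • V := by
    rw [div_eq_inv_mul, mul_smul, eq_inv_smul_iff₀ hμc', sub_smul, sub_eq_iff_eq_add', ← hX]
  refine Submodule.mem_span_singleton.mpr ⟨s / (μ - c), ?_⟩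
  rw [show (s / (μ - c)) • (Fin.cons ((1 - c / μ) * a) V : Fin (n + 1) → K)
      = Fin.cons (s / (μ - c) * ((1 - c / μ) * a)) ((s / (μ - c)) • V) from smul_cons _ _ _, ← hX']
  congr 1
  field_simp
  linear_combination hx

theorem finrank_eigenspace_tailDiagAddRankOne_of_root (hV : V ≠ 0) {μ : K} (hμ : μ ≠ 0)
    (hμc : μ ≠ c)
    (hroot : μ ^ 2 - (c + a ^ 2 + V ⬝ᵥ V) * μ + c * a ^ 2 = 0) :
    finrank K (eigenspace (toLin' (tailDiagAddRankOne c a V)) μ) = 1 := by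
  have hev := hasEigenvector_tailDiagAddRankOne_cons hV hμ hroot
  rw [le_antisymm (eigenspace_tailDiagAddRankOne_le_span_cons hμ hμc)
    ((Submodule.span_singleton_le_iff_mem _ _).mpr hev.1)]
  exact finrank_span_singleton hev.2

end RankOneUpdate

section SecularEquation

variable {c a r μ : ℝ}

theorem secular_discriminant_pos (ha : a ≠ 0) (hr : 0 < r) :
    0 < (c + a ^ 2 + r) ^ 2 - 4 * a ^ 2 * c := by
  rw [show (c + a ^ 2 + r) ^ 2 - 4 * a ^ 2 * c = (c + r - a ^ 2) ^ 2 + 4 * a ^ 2 * r by ring]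
  positivity

theorem secular_root {Δ : ℝ} (hΔ₀ : 0 ≤ Δ) (hΔ : Δ = (c + a ^ 2 + r) ^ 2 - 4 * a ^ 2 * c)
    (hμ : μ = (c + a ^ 2 + r - √Δ) / 2 ∨ μ = (c + a ^ 2 + r + √Δ) / 2) :
    μ ^ 2 - (c + a ^ 2 + r) * μ + c * a ^ 2 = 0 := by
  rcases hμ with rfl | rfl <;> linear_combination (1 / 4) * Real.sq_sqrt hΔ₀ + (1 / 4) * hΔ

theorem pos_of_secular_root (hc : 0 < c) (ha : a ≠ 0) (hr : 0 ≤ r)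
    (hμ : μ ^ 2 - (c + a ^ 2 + r) * μ + c * a ^ 2 = 0) : 0 < μ := by
  have hca : 0 < c * a ^ 2 := by positivity
  by_contra! hμ₀
  nlinarith [mul_nonneg (neg_nonneg.mpr hμ₀) (by positivity : (0 : ℝ) ≤ c + a ^ 2 + r)]

theorem ne_of_secular_root (hc : c ≠ 0) (hr : r ≠ 0)
    (hμ : μ ^ 2 - (c + a ^ 2 + r) * μ + c * a ^ 2 = 0) : μ ≠ c := by
  rintro rfl
  exact mul_ne_zero hr hc (by linear_combination -hμ)

end SecularEquation

theorem matrice_general (n : ℕ)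
    (γ : ℝ) (hγ : 0 < γ)
    (v₁ : ℝ) (hv₁ : v₁ ≠ 0)
    (V : EuclideanSpace ℝ (Fin n)) (hV : V ≠ 0)
    (w : Fin (n + 1) → ℝ) (hw : w = Fin.cons v₁ (fun i => V i))
    (B : Matrix (Fin (n + 1)) (Fin (n + 1)) ℝ)
    (hB : B = γ ^ (-2 : ℤ) •
        Matrix.diagonal (fun i : Fin (n + 1) => if (i : ℕ) = 0 then (0 : ℝ) else 1)
      + Matrix.vecMulVec w w)
    (Δ : ℝ) (hΔ : Δ = (γ ^ (-2 : ℤ) + v₁ ^ 2 + ‖V‖ ^ 2) ^ 2 - 4 * v₁ ^ 2 * γ ^ (-2 : ℤ))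
    (lm lp : ℝ)
    (hlm : lm = (γ ^ (-2 : ℤ) + v₁ ^ 2 + ‖V‖ ^ 2 - Real.sqrt Δ) / 2)
    (hlp : lp = (γ ^ (-2 : ℤ) + v₁ ^ 2 + ‖V‖ ^ 2 + Real.sqrt Δ) / 2)
    (tm tp : ℝ)
    (htm : tm = (1 - γ ^ (-2 : ℤ) / lm) * v₁)
    (htp : tp = (1 - γ ^ (-2 : ℤ) / lp) * v₁) :
    -- (1) eigenspace of γ⁻², and its dimension k − 2 = n − 1
    ((Module.End.eigenspace (Matrix.toLin' B) (γ ^ (-2 : ℤ)) : Set (Fin (n + 1) → ℝ))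
        = {v | v 0 = 0 ∧ ∑ i : Fin n, v i.succ * V i = 0}
      ∧ Module.finrank ℝ (Module.End.eigenspace (Matrix.toLin' B) (γ ^ (-2 : ℤ))) = n - 1)
    -- (2) the two remaining eigenvalues
    ∧ (0 < Δ
      ∧ lm < lp
      ∧ lm ≠ 0 ∧ lp ≠ 0
      ∧ lm ≠ γ ^ (-2 : ℤ) ∧ lp ≠ γ ^ (-2 : ℤ)
      ∧ Module.End.HasEigenvector (Matrix.toLin' B) lm (Fin.cons tm (fun i => V i))
      ∧ Module.End.HasEigenvector (Matrix.toLin' B) lp (Fin.cons tp (fun i => V i))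
      ∧ Module.finrank ℝ (Module.End.eigenspace (Matrix.toLin' B) lm) = 1
      ∧ Module.finrank ℝ (Module.End.eigenspace (Matrix.toLin' B) lp) = 1) := by
  subst hw hB htm htp
  have hc : 0 < γ ^ (-2 : ℤ) := by positivity
  have hV' : (V : Fin n → ℝ) ≠ 0 := fun h => hV (by ext i; exact congrFun h i)
  have hr : ‖V‖ ^ 2 = (V : Fin n → ℝ) ⬝ᵥ V := by
    rw [EuclideanSpace.real_norm_sq_eq]
    simp only [dotProduct, sq]
  have hr₀ : 0 < ‖V‖ ^ 2 := by positivity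
  have hΔ₀ : 0 < Δ := hΔ ▸ secular_discriminant_pos hv₁ hr₀
  have hrm := secular_root hΔ₀.le hΔ (.inl hlm)
  have hrp := secular_root hΔ₀.le hΔ (.inr hlp)
  have hlm₀ := pos_of_secular_root hc hv₁ hr₀.le hrm
  have hlp₀ := pos_of_secular_root hc hv₁ hr₀.le hrp
  have hlmc := ne_of_secular_root hc.ne' hr₀.ne' hrm
  have hlpc := ne_of_secular_root hc.ne' hr₀.ne' hrp
  rw [hr] at hrm hrp
  refine ⟨⟨Set.ext (mem_eigenspace_tailDiagAddRankOne_self_iff hc.ne' hV'),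
      finrank_eigenspace_tailDiagAddRankOne_self hc.ne' hV'⟩,
    hΔ₀, ?_, hlm₀.ne', hlp₀.ne', hlmc, hlpc,
    hasEigenvector_tailDiagAddRankOne_cons hV' hlm₀.ne' hrm,
    hasEigenvector_tailDiagAddRankOne_cons hV' hlp₀.ne' hrp,
    finrank_eigenspace_tailDiagAddRankOne_of_root hV' hlm₀.ne' hlmc hrm,
    finrank_eigenspace_tailDiagAddRankOne_of_root hV' hlp₀.ne' hlpc hrp⟩
  rw [hlm, hlp]
  linarith [Real.sqrt_pos.mpr hΔ₀]

/-- **Lemma `matrice`.** For `B = γ⁻²·diag(0, I_{k−1}) + w·wᵀ` with `w = (v₁, V)`,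
`v₁ ≠ 0`, `V ≠ 0` (here `k = n + 1 ≥ 2`):
(1) the eigenspace of `B` for the value `γ⁻²` is exactly
`{(0, X) : ⟨X, V⟩ = 0}`, of dimension `k − 2 = n − 1`;
(2) `Δ > 0` and `λ₋ < λ₊` are nonzero simple eigenvalues of `B`, distinct from `γ⁻²`,
with eigenvectors `(t₋, V)` and `(t₊, V)` where `t± = (1 − γ⁻²/λ±)·v₁`. -/
theorem matrice (n : ℕ) (hn : 1 ≤ n)
    (γ : ℝ) (hγ : 0 < γ)
    (v₁ : ℝ) (hv₁ : v₁ ≠ 0)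
    (V : EuclideanSpace ℝ (Fin n)) (hV : V ≠ 0)
    (w : Fin (n + 1) → ℝ) (hw : w = Fin.cons v₁ (fun i => V i))
    (B : Matrix (Fin (n + 1)) (Fin (n + 1)) ℝ)
    (hB : B = γ ^ (-2 : ℤ) •
        Matrix.diagonal (fun i : Fin (n + 1) => if (i : ℕ) = 0 then (0 : ℝ) else 1)
      + Matrix.vecMulVec w w)
    (Δ : ℝ) (hΔ : Δ = (γ ^ (-2 : ℤ) + v₁ ^ 2 + ‖V‖ ^ 2) ^ 2 - 4 * v₁ ^ 2 * γ ^ (-2 : ℤ))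
    (lm lp : ℝ)
    (hlm : lm = (γ ^ (-2 : ℤ) + v₁ ^ 2 + ‖V‖ ^ 2 - Real.sqrt Δ) / 2)
    (hlp : lp = (γ ^ (-2 : ℤ) + v₁ ^ 2 + ‖V‖ ^ 2 + Real.sqrt Δ) / 2)
    (tm tp : ℝ)
    (htm : tm = (1 - γ ^ (-2 : ℤ) / lm) * v₁)
    (htp : tp = (1 - γ ^ (-2 : ℤ) / lp) * v₁) :
    -- (1) eigenspace of γ⁻², and its dimension k − 2 = n − 1
    ((Module.End.eigenspace (Matrix.toLin' B) (γ ^ (-2 : ℤ)) : Set (Fin (n + 1) → ℝ))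
        = {v | v 0 = 0 ∧ ∑ i : Fin n, v i.succ * V i = 0}
      ∧ Module.finrank ℝ (Module.End.eigenspace (Matrix.toLin' B) (γ ^ (-2 : ℤ))) = n - 1)
    -- (2) the two remaining eigenvalues
    ∧ (0 < Δ
      ∧ lm < lp
      ∧ lm ≠ 0 ∧ lp ≠ 0
      ∧ lm ≠ γ ^ (-2 : ℤ) ∧ lp ≠ γ ^ (-2 : ℤ)
      ∧ Module.End.HasEigenvector (Matrix.toLin' B) lm (Fin.cons tm (fun i => V i))
      ∧ Module.End.HasEigenvector (Matrix.toLin' B) lp (Fin.cons tp (fun i => V i))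
      ∧ Module.finrank ℝ (Module.End.eigenspace (Matrix.toLin' B) lm) = 1
      ∧ Module.finrank ℝ (Module.End.eigenspace (Matrix.toLin' B) lp) = 1) :=
  matrice_general n γ hγ v₁ hv₁ V hV w hw B hB Δ hΔ lm lp hlm hlp tm tp htm htp
end

section
/- There exist real numbers r and ρ with 0 < ρ < r < δ such that for every (a, b) ∈ Ω′ the following hold: (1) setting U = B_E(a, r) × B_F(b, r), one has U ⊆ Ω″, and there exist an open set V of E with B_E(a, ρ) ⊆ V ⊆ B_E(a, r) and a C² map φ : V → F such that for every (x, y) ∈ Ω″: ((x, y) ∈ U and f(x, y) = f(a, b)) if and only if (x ∈ V and y = φ(x)); (2) for every x ∈ V, ∂₂f(x, φ(x)) is a continuous linear isomorphism from F onto G and Dφ(x) = −[∂₂f(x, φ(x))]^(−1) ∘ ∂₁f(x, φ(x)). (Theorem 'TFIU', a uniform implicit function theorem.) -/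
/-!
A common bound `K ≥ 1` on `Df`, `D²f` and `(∂₂f)⁻¹` over `closure Ω''` makes every slice
`y ↦ f (x, y)`, `x ∈ B(a, r)`, approximate the fixed isomorphism `∂₂f(a, b)` on `B(b, r)` up to
`K r`, with `r` independent of `(a, b)`. For `K² r ≤ 1/2` such a slice is injective on `B(b, r)`
and, by the contraction argument of the inverse function theorem, maps `B̄(b, r/2)` onto a ball
of radius `r/(4K)` around `f (x, b)`, which contains `f (a, b)` as soon as `‖x - a‖ < r/(4K²)`.
Fibrewise uniqueness then glues the local implicit functions into one `C²` map on the open set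
of those `x` for which the equation has a solution in `B(b, r)`.
-/

open Set Metric Filter Topology ContinuousLinearMap
open scoped NNReal

theorem exists_nnreal_pos_lt_and_mul_le_one {δ : ℝ} (hδ : 0 < δ) {c : ℝ≥0} (hc : 0 < c) :
    ∃ r : ℝ≥0, 0 < r ∧ (r : ℝ) < δ ∧ c * r ≤ 1 := by
  refine ⟨min (δ / 2).toNNReal c⁻¹, lt_min (by simpa using hδ) (inv_pos.2 hc), ?_, ?_⟩
  · calc _ ≤ (((δ / 2).toNNReal : ℝ≥0) : ℝ) := by exact_mod_cast min_le_left _ _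
      _ = δ / 2 := Real.coe_toNNReal _ (by positivity)
      _ < δ := half_lt_self hδ
  · calc c * min _ _ ≤ c * c⁻¹ := by gcongr; exact min_le_right _ _
      _ = 1 := mul_inv_cancel₀ hc.ne'

section PartialDerivatives

variable {𝕜 : Type*} [NontriviallyNormedField 𝕜]
  {E F G : Type*} [NormedAddCommGroup E] [NormedSpace 𝕜 E]
  [NormedAddCommGroup F] [NormedSpace 𝕜 F] [NormedAddCommGroup G] [NormedSpace 𝕜 G]
  {f : E × F → G} {x : E} {y : F}

theorem DifferentiableAt.fderiv_comp_prodMk_left (hf : DifferentiableAt 𝕜 f (x, y)) :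
    fderiv 𝕜 (fun x' => f (x', y)) x = fderiv 𝕜 f (x, y) ∘L inl 𝕜 E F :=
  (hf.hasFDerivAt.comp x (hasFDerivAt_prodMk_left x y)).fderiv

theorem DifferentiableAt.fderiv_comp_prodMk_right (hf : DifferentiableAt 𝕜 f (x, y)) :
    fderiv 𝕜 (fun y' => f (x, y')) y = fderiv 𝕜 f (x, y) ∘L inr 𝕜 E F :=
  (hf.hasFDerivAt.comp y (hasFDerivAt_prodMk_right x y)).fderiv

end PartialDerivatives

section ApproximatesLinearOn

variable {𝕜 : Type*} [NontriviallyNormedField 𝕜]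
  {E F : Type*} [NormedAddCommGroup E] [NormedSpace 𝕜 E] [NormedAddCommGroup F] [NormedSpace 𝕜 F]
  {f : E → F} {e : E ≃L[𝕜] F} {s : Set E} {c : ℝ≥0}

theorem ApproximatesLinearOn.injOn_of_opNNNorm_symm_mul_lt_one
    (hf : ApproximatesLinearOn f (e : E →L[𝕜] F) s c)
    (hc : ‖(e.symm : F →L[𝕜] E)‖₊ * c < 1) : InjOn f s := by
  intro y hy y' hy' hyy'
  have hlin : ‖e (y - y')‖ ≤ c * ‖y - y'‖ := by
    have := hf y hy y' hy'
    rwa [hyy', sub_self, zero_sub, norm_neg] at this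
  have hle : ‖y - y'‖ ≤ (‖(e.symm : F →L[𝕜] E)‖₊ * c : ℝ≥0) * ‖y - y'‖ :=
    calc ‖y - y'‖ = ‖(e.symm : F →L[𝕜] E) (e (y - y'))‖ := by simp
      _ ≤ ‖(e.symm : F →L[𝕜] E)‖ * (c * ‖y - y'‖) := (le_opNorm _ _).trans (by gcongr)
      _ = _ := by push_cast; ring
  have hc' : ((‖(e.symm : F →L[𝕜] E)‖₊ * c : ℝ≥0) : ℝ) < 1 := by exact_mod_cast hc
  have : ‖y - y'‖ = 0 := by nlinarith [norm_nonneg (y - y')]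
  exact sub_eq_zero.1 (norm_eq_zero.1 this)

theorem ApproximatesLinearOn.surjOn_closedBall_of_opNNNorm_symm_le [CompleteSpace E] {K : ℝ≥0}
    (hf : ApproximatesLinearOn f (e : E →L[𝕜] F) s c) (hK : ‖(e.symm : F →L[𝕜] E)‖₊ ≤ K)
    {ε : ℝ} {b : E} (hε : 0 ≤ ε) (hεs : closedBall b ε ⊆ s) :
    SurjOn f (closedBall b ε) (closedBall (f b) (((K : ℝ)⁻¹ - c) * ε)) :=
  hf.surjOn_closedBall_of_nonlinearRightInverse
    { e.toNonlinearRightInverse with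
      nnnorm := K
      bound' := fun y => ((e.symm : F →L[𝕜] E).le_opNorm y).trans (by gcongr; exact_mod_cast hK) }
    hε hεs

end ApproximatesLinearOn

theorem Convex.approximatesLinearOn_of_norm_fderiv_sub_le {𝕜 : Type*}
    [NontriviallyNormedField 𝕜] [IsRCLikeNormedField 𝕜] {E F : Type*} [NormedAddCommGroup E]
    [NormedSpace ℝ E] [NormedSpace 𝕜 E] [NormedAddCommGroup F] [NormedSpace 𝕜 F] {f : E → F}
    {A : E →L[𝕜] F} {s : Set E} {c : ℝ≥0} (hs : Convex ℝ s)
    (hf : ∀ x ∈ s, DifferentiableAt 𝕜 f x) (hc : ∀ x ∈ s, ‖fderiv 𝕜 f x - A‖ ≤ c) :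
    ApproximatesLinearOn f A s c :=
  fun _ hx _ hy => hs.norm_image_sub_le_of_norm_fderiv_le' hf hc hy hx

section ImplicitFunctionOnOpen

variable {𝕜 : Type*} [RCLike 𝕜]
  {E F G : Type*} [NormedAddCommGroup E] [NormedSpace 𝕜 E] [CompleteSpace E]
  [NormedAddCommGroup F] [NormedSpace 𝕜 F] [CompleteSpace F]
  [NormedAddCommGroup G] [NormedSpace 𝕜 G] [CompleteSpace G]
  {f : E × F → G} {n : WithTop ℕ∞}

theorem ContDiffAt.eventually_mem_and_apply_implicitFunction {u : E × F} {S : Set (E × F)}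
    (hf : ContDiffAt 𝕜 n f u) (hn : n ≠ 0) (hf₂ : (fderiv 𝕜 f u ∘L inr 𝕜 E F).IsInvertible)
    (hS : S ∈ 𝓝 u) :
    ∀ᶠ x in 𝓝 u.1,
      (x, hf.implicitFunction hn hf₂ x) ∈ S ∧ f (x, hf.implicitFunction hn hf₂ x) = f u := by
  have hgraph : Tendsto (fun x => (x, hf.implicitFunction hn hf₂ x)) (𝓝 u.1) (𝓝 u) := by
    have hcont := (hf.contDiffAt_implicitFunction hn hf₂).continuousAt
    simpa [ContinuousAt, hf.implicitFunction_apply_self hn hf₂] using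
      (continuousAt_id.prodMk hcont).tendsto
  exact (hgraph.eventually_mem hS).and (hf.eventually_apply_implicitFunction hn hf₂)

/-- Around a point of `S` where `f = c`, the level set is a graph by the implicit function
theorem; uniqueness on the fibres of `S` glues these local graphs into a single one. -/
theorem IsOpen.exists_levelSet_eq_graph {S : Set (E × F)} (hS : IsOpen S) (hn : n ≠ 0)
    (hf : ∀ p ∈ S, ContDiffAt 𝕜 n f p)
    (hf₂ : ∀ p ∈ S, (fderiv 𝕜 f p ∘L inr 𝕜 E F).IsInvertible) (c : G)
    (hinj : ∀ x, InjOn (fun y => f (x, y)) (Prod.mk x ⁻¹' S)) :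
    ∃ (V : Set E) (φ : E → F), IsOpen V ∧
      (∀ x y, (x, y) ∈ S ∧ f (x, y) = c ↔ x ∈ V ∧ y = φ x) ∧
      ∀ x ∈ V, ContDiffAt 𝕜 n φ x ∧
        HasFDerivAt φ (-(fderiv 𝕜 f (x, φ x) ∘L inr 𝕜 E F).inverse ∘L
          (fderiv 𝕜 f (x, φ x) ∘L inl 𝕜 E F)) x := by
  set V := {x | ∃ y, (x, y) ∈ S ∧ f (x, y) = c}
  choose! φ hφS hφc using fun x (hx : x ∈ V) => hx
  have hgraph : ∀ x y, (x, y) ∈ S ∧ f (x, y) = c ↔ x ∈ V ∧ y = φ x := by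
    refine fun x y => ⟨fun h => ⟨⟨y, h⟩, ?_⟩, ?_⟩
    · exact hinj x h.1 (hφS x ⟨y, h⟩) (h.2.trans (hφc x ⟨y, h⟩).symm)
    · rintro ⟨hx, rfl⟩
      exact ⟨hφS x hx, hφc x hx⟩
  have hlocal : ∀ x (hx : x ∈ V), ∃ (hfx : ContDiffAt 𝕜 n f (x, φ x)),
      ∀ᶠ x' in 𝓝 x, x' ∈ V ∧ φ x' = hfx.implicitFunction hn (hf₂ _ (hφS x hx)) x' := by
    intro x hx
    refine ⟨hf _ (hφS x hx), ?_⟩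
    filter_upwards [(hf _ (hφS x hx)).eventually_mem_and_apply_implicitFunction hn
      (hf₂ _ (hφS x hx)) (hS.mem_nhds (hφS x hx))] with x' hx'
    rw [hφc x hx] at hx'
    exact ((hgraph _ _).1 hx').imp id Eq.symm
  refine ⟨V, φ, isOpen_iff_mem_nhds.2 fun x hx => ?_, hgraph, fun x hx => ?_⟩
  · obtain ⟨_, hev⟩ := hlocal x hx
    exact hev.mono fun _ h => h.1
  · obtain ⟨hfx, hev⟩ := hlocal x hx
    have hφψ : φ =ᶠ[𝓝 x] hfx.implicitFunction hn (hf₂ _ (hφS x hx)) := hev.mono fun _ h => h.2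
    exact ⟨(hfx.contDiffAt_implicitFunction hn _).congr_of_eventuallyEq hφψ,
      (hfx.hasStrictFDerivAt_implicitFunction hn _).hasFDerivAt.congr_of_eventuallyEq hφψ⟩

end ImplicitFunctionOnOpen

section UniformSlices

variable {E F G : Type*} [NormedAddCommGroup E] [NormedSpace ℝ E]
  [NormedAddCommGroup F] [NormedSpace ℝ F] [NormedAddCommGroup G] [NormedSpace ℝ G]
  {f : E × F → G} {a : E} {b : F} {r K : ℝ≥0}

theorem approximatesLinearOn_slice (hf : ∀ p ∈ ball (a, b) r, ContDiffAt ℝ 2 f p)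
    (hD2f : ∀ p ∈ ball (a, b) r, ‖fderiv ℝ (fderiv ℝ f) p‖ ≤ K) {x : E} (hx : x ∈ ball a r) :
    ApproximatesLinearOn (fun y => f (x, y)) (fderiv ℝ f (a, b) ∘L inr ℝ E F) (ball b r)
      (K * r) := by
  have hdf : ∀ p ∈ ball (a, b) r, DifferentiableAt ℝ f p := fun p hp =>
    (hf p hp).differentiableAt two_ne_zero
  have hdDf : ∀ p ∈ ball (a, b) r, DifferentiableAt ℝ (fderiv ℝ f) p := fun p hp =>
    ((hf p hp).fderiv_right (m := 1) le_rfl).differentiableAt one_ne_zero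
  have hmem : ∀ y ∈ ball b r, (x, y) ∈ ball (a, b) r := fun y hy =>
    ball_prod_same a b r ▸ ⟨hx, hy⟩
  refine (convex_ball b r).approximatesLinearOn_of_norm_fderiv_sub_le (fun y hy => ?_)
    fun y hy => ?_
  · exact ((hdf _ (hmem y hy)).hasFDerivAt.comp y (hasFDerivAt_prodMk_right x y)).differentiableAt
  · rw [(hdf _ (hmem y hy)).fderiv_comp_prodMk_right, ← sub_comp]
    calc ‖(fderiv ℝ f (x, y) - fderiv ℝ f (a, b)) ∘L inr ℝ E F‖
        ≤ ‖fderiv ℝ f (x, y) - fderiv ℝ f (a, b)‖ := by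
          grw [opNorm_comp_le, norm_inr_le_one, mul_one]
      _ ≤ K * ‖(x, y) - (a, b)‖ :=
          (convex_ball (a, b) r).norm_image_sub_le_of_norm_fderiv_le hdDf hD2f
            (mem_ball_self (pos_of_mem_ball hx)) (hmem y hy)
      _ ≤ K * r := by gcongr; exact (mem_ball_iff_norm.1 (hmem y hy)).le
      _ = (K * r : ℝ≥0) := by push_cast; rfl

theorem injOn_slice (hf : ∀ p ∈ ball (a, b) r, ContDiffAt ℝ 2 f p)
    (hD2f : ∀ p ∈ ball (a, b) r, ‖fderiv ℝ (fderiv ℝ f) p‖ ≤ K) {e : F ≃L[ℝ] G}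
    (he : (e : F →L[ℝ] G) = fderiv ℝ f (a, b) ∘L inr ℝ E F)
    (he_symm : ‖(e.symm : G →L[ℝ] F)‖₊ ≤ K) (hr : 2 * K ^ 2 * r ≤ 1) {x : E}
    (hx : x ∈ ball a r) : InjOn (fun y => f (x, y)) (ball b r) := by
  refine (he ▸ approximatesLinearOn_slice hf hD2f hx).injOn_of_opNNNorm_symm_mul_lt_one ?_
  have hr0 : (0 : ℝ) < r := pos_of_mem_ball hx
  have hr' : (2 * K ^ 2 * r : ℝ) ≤ 1 := by exact_mod_cast hr
  have hKKr : K * (K * r) < 1 := by exact_mod_cast (show (K * (K * r) : ℝ) < 1 by nlinarith)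
  exact (mul_le_mul_left he_symm _).trans_lt hKKr

theorem exists_slice_eq [CompleteSpace F] (hf : ∀ p ∈ ball (a, b) r, ContDiffAt ℝ 2 f p)
    (hDf : ∀ p ∈ ball (a, b) r, ‖fderiv ℝ f p‖ ≤ K)
    (hD2f : ∀ p ∈ ball (a, b) r, ‖fderiv ℝ (fderiv ℝ f) p‖ ≤ K) {e : F ≃L[ℝ] G}
    (he : (e : F →L[ℝ] G) = fderiv ℝ f (a, b) ∘L inr ℝ E F)
    (he_symm : ‖(e.symm : G →L[ℝ] F)‖₊ ≤ K) (hK : 1 ≤ K) (hr : 2 * K ^ 2 * r ≤ 1) {x : E}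
    (hx : x ∈ ball a (r / (4 * K ^ 2))) : ∃ y ∈ ball b r, f (x, y) = f (a, b) := by
  have hr0 : (0 : ℝ) < r := (div_pos_iff_of_pos_right (by positivity)).1 (pos_of_mem_ball hx)
  have hr' : (2 * K ^ 2 * r : ℝ) ≤ 1 := by exact_mod_cast hr
  have hxa : ‖x - a‖ < r / (4 * K ^ 2) := by simpa [dist_eq_norm] using hx
  have hxr : x ∈ ball a r := by
    refine mem_ball_iff_norm.2 (hxa.trans_le (div_le_self hr0.le ?_))
    nlinarith
  have hxb : (x, b) ∈ ball (a, b) r := ball_prod_same a b r ▸ ⟨hxr, mem_ball_self hr0⟩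
  have hclose : dist (f (a, b)) (f (x, b)) ≤ ((K : ℝ)⁻¹ - (K * r : ℝ≥0)) * (r / 2) :=
    calc dist (f (a, b)) (f (x, b)) = ‖f (x, b) - f (a, b)‖ := by rw [dist_comm, dist_eq_norm]
      _ ≤ K * ‖(x, b) - (a, b)‖ :=
          (convex_ball (a, b) r).norm_image_sub_le_of_norm_fderiv_le
            (fun p hp => (hf p hp).differentiableAt two_ne_zero) hDf (mem_ball_self hr0) hxb
      _ = K * ‖x - a‖ := by simp
      _ ≤ K * (r / (4 * K ^ 2)) := by gcongr
      _ ≤ ((K : ℝ)⁻¹ - (K * r : ℝ≥0)) * (r / 2) := by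
          push_cast
          field_simp
          nlinarith
  obtain ⟨y, hy, hfy⟩ :=
    (he ▸ approximatesLinearOn_slice hf hD2f hxr).surjOn_closedBall_of_opNNNorm_symm_le he_symm
      (by positivity) (closedBall_subset_ball (half_lt_self hr0)) hclose
  exact ⟨y, closedBall_subset_ball (half_lt_self hr0) hy, hfy⟩

theorem exists_levelSet_eq_graph_on_ball [CompleteSpace E] [CompleteSpace F] [CompleteSpace G]
    (hr0 : 0 < r) (hf : ∀ p ∈ ball (a, b) r, ContDiffAt ℝ 2 f p)
    (hf₂ : ∀ p ∈ ball (a, b) r, ∃ e : F ≃L[ℝ] G,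
      (e : F →L[ℝ] G) = fderiv ℝ (fun y => f (p.1, y)) p.2)
    (hDf : ∀ p ∈ ball (a, b) r, ‖fderiv ℝ f p‖ ≤ K)
    (hD2f : ∀ p ∈ ball (a, b) r, ‖fderiv ℝ (fderiv ℝ f) p‖ ≤ K) {e : F ≃L[ℝ] G}
    (he : (e : F →L[ℝ] G) = fderiv ℝ (fun y => f (a, y)) b)
    (he_symm : ‖(e.symm : G →L[ℝ] F)‖₊ ≤ K) (hK : 1 ≤ K) (hr : 2 * K ^ 2 * r ≤ 1) :
    ∃ (V : Set E) (φ : E → F), IsOpen V ∧ ball a (r / (4 * K ^ 2)) ⊆ V ∧ V ⊆ ball a r ∧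
      (∀ x y, (x, y) ∈ ball a r ×ˢ ball b r ∧ f (x, y) = f (a, b) ↔ x ∈ V ∧ y = φ x) ∧
      ∀ x ∈ V, ContDiffAt ℝ 2 φ x ∧ ∀ e' : F ≃L[ℝ] G,
        (e' : F →L[ℝ] G) = fderiv ℝ (fun y => f (x, y)) (φ x) →
          fderiv ℝ φ x = -((e'.symm : G →L[ℝ] F).comp (fderiv ℝ (fun x' => f (x', φ x)) x)) := by
  have hS : ball a r ×ˢ ball b r = ball (a, b) r := ball_prod_same a b r
  have hd : ∀ p ∈ ball (a, b) r, DifferentiableAt ℝ f p := fun p hp =>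
    (hf p hp).differentiableAt two_ne_zero
  have he_inr := he.trans (hd _ (mem_ball_self hr0)).fderiv_comp_prodMk_right
  have hinv₂ : ∀ p ∈ ball (a, b) r, (fderiv ℝ f p ∘L inr ℝ E F).IsInvertible := fun p hp =>
    let ⟨e, he⟩ := hf₂ p hp
    ⟨e, he.trans (hd p hp).fderiv_comp_prodMk_right⟩
  obtain ⟨V, φ, hV, hgraph, hφ⟩ := (isOpen_ball.prod isOpen_ball).exists_levelSet_eq_graph
    two_ne_zero (fun p hp => hf p (hS ▸ hp)) (fun p hp => hinv₂ p (hS ▸ hp)) (f (a, b))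
    (fun x y hy y' hy' => injOn_slice hf hD2f he_inr he_symm hr hy.1 hy.2 hy'.2)
  refine ⟨V, φ, hV, fun x hx => ?_, fun x hx => ((hgraph x (φ x)).2 ⟨hx, rfl⟩).1.1, hgraph,
    fun x hx => ⟨(hφ x hx).1, fun e' he' => ?_⟩⟩
  · obtain ⟨y, hy, hfy⟩ := exists_slice_eq hf hDf hD2f he_inr he_symm hK hr hx
    have hρr : (r / (4 * K ^ 2) : ℝ) ≤ r := div_le_self r.2 (by nlinarith)
    exact ((hgraph x y).1 ⟨⟨ball_subset_ball hρr hx, hy⟩, hfy⟩).1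
  · have hdx := hd _ (hS ▸ ((hgraph x (φ x)).2 ⟨hx, rfl⟩).1)
    rw [(hφ x hx).2.fderiv, hdx.fderiv_comp_prodMk_left, ← hdx.fderiv_comp_prodMk_right, ← he',
      inverse_equiv]

end UniformSlices

theorem TFIU_general
    {E F G : Type*}
    [NormedAddCommGroup E] [NormedSpace ℝ E] [CompleteSpace E]
    [NormedAddCommGroup F] [NormedSpace ℝ F] [CompleteSpace F]
    [NormedAddCommGroup G] [NormedSpace ℝ G] [CompleteSpace G]
    (O : Set (E × F)) (hO : IsOpen O)
    (f : E × F → G) (hf : ContDiffOn ℝ 2 f O)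
    (hiso : ∀ p ∈ O, ∃ e : F ≃L[ℝ] G,
      (e : F →L[ℝ] G) = fderiv ℝ (fun y => f (p.1, y)) p.2)
    (Ω' Ω'' : Set (E × F))
    (hsub2 : closure Ω'' ⊆ O)
    (hDf : ∃ C : ℝ, ∀ p ∈ closure Ω'', ‖fderiv ℝ f p‖ ≤ C)
    (hD2f : ∃ C : ℝ, ∀ p ∈ closure Ω'', ‖fderiv ℝ (fderiv ℝ f) p‖ ≤ C)
    (hinv : ∃ C : ℝ, ∀ p ∈ closure Ω'', ∀ e : F ≃L[ℝ] G,
      (e : F →L[ℝ] G) = fderiv ℝ (fun y => f (p.1, y)) p.2 → ‖(e.symm : G →L[ℝ] F)‖ ≤ C)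
    (δ : ℝ) (hδpos : 0 < δ)
    (hδ : ∀ p ∈ closure Ω', ∀ q, q ∉ Ω'' → δ ≤ dist p q) :
    ∃ r ρ : ℝ, 0 < ρ ∧ ρ < r ∧ r < δ ∧
      ∀ a : E, ∀ b : F, (a, b) ∈ Ω' →
        (Metric.ball a r ×ˢ Metric.ball b r ⊆ Ω'') ∧
        ∃ (V : Set E) (φ : E → F),
          IsOpen V ∧ Metric.ball a ρ ⊆ V ∧ V ⊆ Metric.ball a r ∧
          ContDiffOn ℝ 2 φ V ∧
          (∀ x : E, ∀ y : F, (x, y) ∈ Ω'' →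
            (((x, y) ∈ Metric.ball a r ×ˢ Metric.ball b r ∧ f (x, y) = f (a, b))
              ↔ (x ∈ V ∧ y = φ x))) ∧
          (∀ x ∈ V, ∃ e : F ≃L[ℝ] G,
            (e : F →L[ℝ] G) = fderiv ℝ (fun y => f (x, y)) (φ x) ∧
            fderiv ℝ φ x
              = -((e.symm : G →L[ℝ] F).comp (fderiv ℝ (fun x' => f (x', φ x)) x))) := by
  obtain ⟨L, hL⟩ := hDf
  obtain ⟨M, hM⟩ := hD2f
  obtain ⟨C, hC⟩ := hinv
  obtain ⟨K, hK, hLK, hMK, hCK⟩ : ∃ K : ℝ≥0, 1 ≤ K ∧ L ≤ K ∧ M ≤ K ∧ C ≤ K :=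
    ⟨max 1 (max L (max M C)).toNNReal, le_max_left _ _, by simp, by simp, by simp⟩
  obtain ⟨r, hr0, hrδ, hrK⟩ := exists_nnreal_pos_lt_and_mul_le_one hδpos (c := 2 * K ^ 2)
    (by positivity)
  refine ⟨r, r / (4 * K ^ 2), by positivity, div_lt_self hr0 (by nlinarith), hrδ,
    fun a b hab => ?_⟩
  have hball : ball (a, b) r ⊆ Ω'' := fun q hq => by_contra fun hq' =>
    (hδ _ (subset_closure hab) q hq').not_gt ((mem_ball'.1 hq).trans hrδ)
  have hcl : ∀ p ∈ ball (a, b) r, p ∈ closure Ω'' := fun p hp => subset_closure (hball hp)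
  have hballO : ∀ p ∈ ball (a, b) r, p ∈ O := fun p hp => hsub2 (hcl p hp)
  have hfC : ∀ p ∈ O, ContDiffAt ℝ 2 f p := fun p hp => hf.contDiffAt (hO.mem_nhds hp)
  obtain ⟨e, he⟩ := hiso (a, b) (hballO _ (mem_ball_self hr0))
  obtain ⟨V, φ, hV, hρV, hVr, hgraph, hφ⟩ := exists_levelSet_eq_graph_on_ball hr0
    (fun p hp => hfC p (hballO p hp)) (fun p hp => hiso p (hballO p hp))
    (fun p hp => (hL p (hcl p hp)).trans hLK) (fun p hp => (hM p (hcl p hp)).trans hMK) he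
    (by exact_mod_cast (hC _ (hcl _ (mem_ball_self hr0)) e he).trans hCK) hK hrK
  refine ⟨ball_prod_same a b r ▸ hball, V, φ, hV, hρV, hVr,
    fun x hx => (hφ x hx).1.contDiffWithinAt, fun x y _ => hgraph x y, fun x hx => ?_⟩
  obtain ⟨e₂, he₂⟩ :=
    hiso (x, φ x) (hballO _ (ball_prod_same a b r ▸ ((hgraph x (φ x)).2 ⟨hx, rfl⟩).1))
  exact ⟨e₂, he₂, (hφ x hx).2 e₂ he₂⟩

/-- **Theorem `TFIU` (uniform implicit function theorem).** There exist `0 < ρ < r < δ`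
such that around every `(a, b) ∈ Ω′` the equation `f(x, y) = f(a, b)` is solved, inside
`B(a, r) × B(b, r) ⊆ Ω″`, by a C² map `φ` defined on an open set `V` with
`B(a, ρ) ⊆ V ⊆ B(a, r)`, and `Dφ(x) = −[∂₂f(x, φ(x))]⁻¹ ∘ ∂₁f(x, φ(x))` on `V`. -/
theorem TFIU
    {E F G : Type*}
    [NormedAddCommGroup E] [NormedSpace ℝ E] [CompleteSpace E]
    [NormedAddCommGroup F] [NormedSpace ℝ F] [CompleteSpace F]
    [NormedAddCommGroup G] [NormedSpace ℝ G] [CompleteSpace G]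
    (O : Set (E × F)) (hO : IsOpen O)
    (f : E × F → G) (hf : ContDiffOn ℝ 2 f O)
    (hiso : ∀ p ∈ O, ∃ e : F ≃L[ℝ] G,
      (e : F →L[ℝ] G) = fderiv ℝ (fun y => f (p.1, y)) p.2)
    (Ω' Ω'' : Set (E × F)) (hΩ'open : IsOpen Ω') (hΩ''open : IsOpen Ω'')
    (hsub1 : closure Ω' ⊆ Ω'') (hsub2 : closure Ω'' ⊆ O)
    (hDf : ∃ C : ℝ, ∀ p ∈ closure Ω'', ‖fderiv ℝ f p‖ ≤ C)
    (hD2f : ∃ C : ℝ, ∀ p ∈ closure Ω'', ‖fderiv ℝ (fderiv ℝ f) p‖ ≤ C)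
    (hinv : ∃ C : ℝ, ∀ p ∈ closure Ω'', ∀ e : F ≃L[ℝ] G,
      (e : F →L[ℝ] G) = fderiv ℝ (fun y => f (p.1, y)) p.2 → ‖(e.symm : G →L[ℝ] F)‖ ≤ C)
    (δ : ℝ) (hδpos : 0 < δ)
    (hδ : ∀ p ∈ closure Ω', ∀ q, q ∉ Ω'' → δ ≤ dist p q) :
    ∃ r ρ : ℝ, 0 < ρ ∧ ρ < r ∧ r < δ ∧
      ∀ a : E, ∀ b : F, (a, b) ∈ Ω' →
        (Metric.ball a r ×ˢ Metric.ball b r ⊆ Ω'') ∧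
        ∃ (V : Set E) (φ : E → F),
          IsOpen V ∧ Metric.ball a ρ ⊆ V ∧ V ⊆ Metric.ball a r ∧
          ContDiffOn ℝ 2 φ V ∧
          (∀ x : E, ∀ y : F, (x, y) ∈ Ω'' →
            (((x, y) ∈ Metric.ball a r ×ˢ Metric.ball b r ∧ f (x, y) = f (a, b))
              ↔ (x ∈ V ∧ y = φ x))) ∧
          (∀ x ∈ V, ∃ e : F ≃L[ℝ] G,
            (e : F →L[ℝ] G) = fderiv ℝ (fun y => f (x, y)) (φ x) ∧
            fderiv ℝ φ x
              = -((e.symm : G →L[ℝ] F).comp (fderiv ℝ (fun x' => f (x', φ x)) x))) :=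
  TFIU_general O hO f hf hiso Ω' Ω'' hsub2 hDf hD2f hinv δ hδpos hδ
end

section
/- Let M¹ > 0 satisfy ‖DΦ₀(u)‖ ≤ M¹ (operator norm of the differential) for all u ∈ [−L, L]^k, and let M_Γ ≥ ‖Γ‖ (operator norm). Let θ ∈ ℝ, let j ≠ j′ be integers, and let x, x′ ∈ Ω satisfy θ + Φ₀(Γx) = (2j−1)L and θ + Φ₀(Γx′) = (2j′−1)L. Then ‖x − x′‖ ≥ 2L/(M¹·M_Γ). Consequently, if ε₀ < L/(2·M¹·M_Γ), then no open ball of radius ε₀ can intersect both the ε₀-neighbourhood of Σ_j^θ = { x ∈ Ω : θ + Φ₀(Γx) = (2j−1)L } and the ε₀-neighbourhood of Σ_{j′}^θ. (Lemma 'dist-front': separation of the slanted boundaries.) -/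
open MeasureTheory Metric

/-! The level sets `Σ_j^θ` are preimages under `Φ₀ ∘ Γ` of values that are `2L` apart, and
`Γ` maps `Ω` into the cube `[-L, L]^k`, where the mean value inequality makes `Φ₀ ∘ Γ`
Lipschitz with constant `M¹ M_Γ`; hence points of different level sets are `2L/(M¹ M_Γ)` apart.
Two `ε₀`-neighbourhoods met by one `ε₀`-ball would contain points less than `4ε₀` apart. -/

section EuclideanCube

variable {ι : Type*}

lemma isOpen_setOf_forall_mem_Ioo_s9 [Finite ι] (a b : ℝ) :
    IsOpen {x : EuclideanSpace ℝ ι | ∀ i, a < x i ∧ x i < b} := by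
  simp only [Set.ofPred_forall]
  exact isOpen_iInter_of_finite fun i =>
    isOpen_Ioo.preimage (EuclideanSpace.proj (𝕜 := ℝ) i).continuous

lemma convex_setOf_forall_abs_le (L : ℝ) :
    Convex ℝ {x : EuclideanSpace ℝ ι | ∀ i, |x i| ≤ L} := by
  intro u hu v hv a b ha hb hab i
  calc |a * u i + b * v i| ≤ a * |u i| + b * |v i| := by
        simpa only [abs_mul, abs_of_nonneg ha, abs_of_nonneg hb] using abs_add_le (a * u i) (b * v i)
    _ ≤ a * L + b * L := by gcongr <;> [exact hu i; exact hv i]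
    _ = L := by rw [← add_mul, hab, one_mul]

lemma setOf_forall_abs_le_subset_setOf_forall_mem_Ioo {L β : ℝ} (hβ : 0 < β) :
    {x : EuclideanSpace ℝ ι | ∀ i, |x i| ≤ L} ⊆ {x | ∀ i, -(L + β) < x i ∧ x i < L + β} :=
  fun x hx i => by
    have := abs_le.mp (hx i)
    constructor <;> linarith

end EuclideanCube

lemma abs_zpow_neg_mul_le {γ z L : ℝ} (n : ℕ) (hL : 0 ≤ L) (hz : |z| ≤ γ ^ n * L) :
    |γ ^ (-(n : ℤ)) * z| ≤ L := by
  rcases eq_or_ne γ 0 with rfl | hγ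
  · rcases n.eq_zero_or_pos with rfl | hn
    · simpa using hz
    · simpa [zero_zpow _ (by omega : -(n : ℤ) ≠ 0)] using hL
  calc |γ ^ (-(n : ℤ)) * z| ≤ |γ ^ (-(n : ℤ))| * (|γ ^ n| * L) := by
        rw [abs_mul]
        gcongr
        exact hz.trans (mul_le_mul_of_nonneg_right (le_abs_self _) hL)
    _ = L := by
        rw [← mul_assoc, ← abs_mul, ← zpow_natCast, ← zpow_add₀ hγ, neg_add_cancel, zpow_zero,
          abs_one, one_mul]

lemma Convex.norm_comp_clm_sub_le {E F G : Type*} [NormedAddCommGroup E] [NormedSpace ℝ E]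
    [NormedAddCommGroup F] [NormedSpace ℝ F] [NormedAddCommGroup G] [NormedSpace ℝ G]
    {s : Set F} (hs : Convex ℝ s) {Φ : F → G} {C : ℝ} (Γ : E →L[ℝ] F)
    (hΦ : ∀ u ∈ s, DifferentiableAt ℝ Φ u) (bound : ∀ u ∈ s, ‖fderiv ℝ Φ u‖ ≤ C)
    {x y : E} (hx : Γ x ∈ s) (hy : Γ y ∈ s) :
    ‖Φ (Γ x) - Φ (Γ y)‖ ≤ C * ‖Γ‖ * ‖x - y‖ := by
  have hC : 0 ≤ C := (norm_nonneg _).trans (bound _ hx)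
  calc ‖Φ (Γ x) - Φ (Γ y)‖ ≤ C * ‖Γ x - Γ y‖ :=
        hs.norm_image_sub_le_of_norm_fderiv_le hΦ bound hy hx
    _ ≤ C * (‖Γ‖ * ‖x - y‖) := by
        rw [← map_sub]
        exact mul_le_mul_of_nonneg_left (Γ.le_opNorm _) hC
    _ = C * ‖Γ‖ * ‖x - y‖ := (mul_assoc _ _ _).symm

lemma two_mul_le_abs_sub_of_odd_levels {θ a b L : ℝ} {j j' : ℤ} (hjj' : j ≠ j') (hL : 0 ≤ L)
    (ha : θ + a = (2 * (j : ℝ) - 1) * L) (hb : θ + b = (2 * (j' : ℝ) - 1) * L) :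
    2 * L ≤ |a - b| := by
  have hj : (1 : ℝ) ≤ |(j : ℝ) - j'| := by exact_mod_cast Int.one_le_abs (sub_ne_zero.mpr hjj')
  have hab : a - b = 2 * L * ((j : ℝ) - j') := by linear_combination ha - hb
  rw [hab, abs_mul, abs_of_nonneg (by positivity : 0 ≤ 2 * L)]
  exact le_mul_of_one_le_right (by positivity) hj

lemma not_ball_inter_thickening_nonempty_and {X : Type*} [PseudoMetricSpace X] {A B : Set X}
    {ε : ℝ} (hAB : ∀ p ∈ A, ∀ q ∈ B, 4 * ε ≤ dist p q) (c : X) :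
    ¬((ball c ε ∩ thickening ε A).Nonempty ∧ (ball c ε ∩ thickening ε B).Nonempty) := by
  rintro ⟨⟨a, hca, haA⟩, ⟨b, hcb, hbB⟩⟩
  obtain ⟨p, hp, hap⟩ := mem_thickening_iff.mp haA
  obtain ⟨q, hq, hbq⟩ := mem_thickening_iff.mp hbB
  have hpq : dist p q < 4 * ε := by
    linarith [dist_triangle4 p a b q, dist_triangle_left a b c, dist_comm p a,
      mem_ball'.mp hca, mem_ball'.mp hcb]
  exact (hAB p hp q hq).not_gt hpq

theorem dist_front_general (k : ℕ)
    (L β : ℝ)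
    (hL : 0 < L) (hβ : 0 < β)
    (γ : ℝ)
    (Φ₀ : EuclideanSpace ℝ (Fin k) → ℝ)
    (cube : Set (EuclideanSpace ℝ (Fin k)))
    (hcube : cube = {x | ∀ j : Fin k, -(L + β) < x j ∧ x j < L + β})
    (hΦ : ContDiffOn ℝ 2 Φ₀ cube)
    (Γ : EuclideanSpace ℝ (Fin k) →L[ℝ] EuclideanSpace ℝ (Fin k))
    (hΓ : ∀ x (j : Fin k), Γ x j = γ ^ (-((j : ℕ) : ℤ)) * x j)
    (Ω : Set (EuclideanSpace ℝ (Fin k)))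
    (hΩ : Ω = {u | ∀ j : Fin k, |u j| ≤ γ ^ (j : ℕ) * L})
    (M1 MΓ : ℝ)
    (hM1 : ∀ u : EuclideanSpace ℝ (Fin k), (∀ j : Fin k, |u j| ≤ L) →
      ‖fderiv ℝ Φ₀ u‖ ≤ M1)
    (hMΓ : ‖Γ‖ ≤ MΓ)
    (θ : ℝ) (j j' : ℤ) (hjj' : j ≠ j')
    (Sig : ℤ → Set (EuclideanSpace ℝ (Fin k)))
    (hSig : ∀ i : ℤ, Sig i = {z | z ∈ Ω ∧ θ + Φ₀ (Γ z) = (2 * (i : ℝ) - 1) * L})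
    (x x' : EuclideanSpace ℝ (Fin k)) (hx : x ∈ Ω) (hx' : x' ∈ Ω)
    (hxeq : θ + Φ₀ (Γ x) = (2 * (j : ℝ) - 1) * L)
    (hx'eq : θ + Φ₀ (Γ x') = (2 * (j' : ℝ) - 1) * L) :
    2 * L / (M1 * MΓ) ≤ ‖x - x'‖ ∧
    ∀ ε₀ : ℝ, 0 < ε₀ → ε₀ < L / (2 * M1 * MΓ) →
      ∀ c : EuclideanSpace ℝ (Fin k),
        ¬((ball c ε₀ ∩ Metric.thickening ε₀ (Sig j)).Nonempty ∧
          (ball c ε₀ ∩ Metric.thickening ε₀ (Sig j')).Nonempty) := by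
  set S := {u : EuclideanSpace ℝ (Fin k) | ∀ i, |u i| ≤ L}
  have hΓS : ∀ z ∈ Ω, Γ z ∈ S := fun z hz i => by
    rw [hΓ]
    exact abs_zpow_neg_mul_le _ hL.le ((hΩ ▸ hz) i)
  have hdiff : ∀ u ∈ S, DifferentiableAt ℝ Φ₀ u := fun u hu =>
    (hΦ.contDiffAt ((hcube ▸ isOpen_setOf_forall_mem_Ioo_s9 _ _).mem_nhds
      (hcube ▸ setOf_forall_abs_le_subset_setOf_forall_mem_Ioo hβ hu))).differentiableAt
      (by norm_num)
  have hsep : ∀ p ∈ Ω, ∀ q ∈ Ω, θ + Φ₀ (Γ p) = (2 * (j : ℝ) - 1) * L →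
      θ + Φ₀ (Γ q) = (2 * (j' : ℝ) - 1) * L → 2 * L / (M1 * MΓ) ≤ ‖p - q‖ := by
    intro p hp q hq hpj hqj'
    have hM1_nonneg : 0 ≤ M1 := (norm_nonneg _).trans (hM1 _ (hΓS p hp))
    refine div_le_of_le_mul₀ (by positivity [(norm_nonneg Γ).trans hMΓ]) (norm_nonneg _) ?_
    calc 2 * L ≤ ‖Φ₀ (Γ p) - Φ₀ (Γ q)‖ := two_mul_le_abs_sub_of_odd_levels hjj' hL.le hpj hqj'
      _ ≤ M1 * ‖Γ‖ * ‖p - q‖ :=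
        (convex_setOf_forall_abs_le L).norm_comp_clm_sub_le Γ hdiff hM1 (hΓS p hp) (hΓS q hq)
      _ ≤ ‖p - q‖ * (M1 * MΓ) := by
        rw [mul_comm]
        gcongr
  refine ⟨hsep x hx x' hx' hxeq hx'eq, fun ε₀ _ hε₀ c => ?_⟩
  refine not_ball_inter_thickening_nonempty_and (fun p hp q hq => ?_) c
  rw [hSig] at hp hq
  calc 4 * ε₀ ≤ 4 * (L / (2 * M1 * MΓ)) := by linarith
    _ = 2 * L / (M1 * MΓ) := by ring
    _ ≤ dist p q := dist_eq_norm p q ▸ hsep p hp.1 q hq.1 hp.2 hq.2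

/-- **Lemma `dist-front`.** If `θ + Φ₀(Γx) = (2j−1)L` and `θ + Φ₀(Γx′) = (2j′−1)L` with
`j ≠ j′` and `x, x′ ∈ Ω`, then `‖x − x′‖ ≥ 2L/(M¹·M_Γ)`; consequently, if
`ε₀ < L/(2M¹M_Γ)`, no open ball of radius `ε₀` can meet both the `ε₀`-neighbourhood of
`Σ_j^θ` and the `ε₀`-neighbourhood of `Σ_{j′}^θ`. -/
theorem dist_front (k : ℕ) (hk : 2 ≤ k)
    (L β σ C₁ C₂ : ℝ)
    (hL : 0 < L) (hβ : 0 < β) (hσ : 1 < σ) (hC₁ : 1 < C₁) (hC₂ : 1 < C₂)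
    (γ : ℝ) (hγ : γ = (C₁ * σ) ^ (-(1 : ℝ) / 2))
    (Φ₀ : EuclideanSpace ℝ (Fin k) → ℝ)
    (cube : Set (EuclideanSpace ℝ (Fin k)))
    (hcube : cube = {x | ∀ j : Fin k, -(L + β) < x j ∧ x j < L + β})
    (hΦ : ContDiffOn ℝ 2 Φ₀ cube)
    (Γ : EuclideanSpace ℝ (Fin k) →L[ℝ] EuclideanSpace ℝ (Fin k))
    (hΓ : ∀ x (j : Fin k), Γ x j = γ ^ (-((j : ℕ) : ℤ)) * x j)
    (Ω : Set (EuclideanSpace ℝ (Fin k)))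
    (hΩ : Ω = {u | ∀ j : Fin k, |u j| ≤ γ ^ (j : ℕ) * L})
    (M1 MΓ : ℝ) (hM1pos : 0 < M1) (hMΓpos : 0 < MΓ)
    (hM1 : ∀ u : EuclideanSpace ℝ (Fin k), (∀ j : Fin k, |u j| ≤ L) →
      ‖fderiv ℝ Φ₀ u‖ ≤ M1)
    (hMΓ : ‖Γ‖ ≤ MΓ)
    (θ : ℝ) (j j' : ℤ) (hjj' : j ≠ j')
    (Sig : ℤ → Set (EuclideanSpace ℝ (Fin k)))
    (hSig : ∀ i : ℤ, Sig i = {z | z ∈ Ω ∧ θ + Φ₀ (Γ z) = (2 * (i : ℝ) - 1) * L})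
    (x x' : EuclideanSpace ℝ (Fin k)) (hx : x ∈ Ω) (hx' : x' ∈ Ω)
    (hxeq : θ + Φ₀ (Γ x) = (2 * (j : ℝ) - 1) * L)
    (hx'eq : θ + Φ₀ (Γ x') = (2 * (j' : ℝ) - 1) * L) :
    2 * L / (M1 * MΓ) ≤ ‖x - x'‖ ∧
    ∀ ε₀ : ℝ, 0 < ε₀ → ε₀ < L / (2 * M1 * MΓ) →
      ∀ c : EuclideanSpace ℝ (Fin k),
        ¬((ball c ε₀ ∩ Metric.thickening ε₀ (Sig j)).Nonempty ∧
          (ball c ε₀ ∩ Metric.thickening ε₀ (Sig j')).Nonempty) :=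
  dist_front_general k L β hL hβ γ Φ₀ cube hcube hΦ Γ hΓ Ω hΩ M1 MΓ hM1 hMΓ θ j j' hjj' Sig hSig x
    x' hx hx' hxeq hx'eq
end

section
/- For every ε > 0, the map from ℝ^k × ℝ to [0, ∞] sending (x, θ) to osc(g(·, θ), B_ε(x)) := esssup over (y, z) ∈ B_ε(x) × B_ε(x) (with respect to the Lebesgue measure on ℝ^k × ℝ^k) of |g(y, θ) − g(z, θ)| is measurable. (Lemma 'measur_osc': measurability of the oscillation over balls of a jointly measurable family.) -/
open MeasureTheory Set

/-!
The oscillation exceeds `a` exactly when the set `{(y, z) ∈ B_ε(x)² | |g(y, θ) - g(z, θ)| > a}`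
is not Lebesgue-null. This set is the section at `(x, θ)` of a measurable subset of
`(ℝ^k × ℝ) × (ℝ^k × ℝ^k)`, and the measure of the sections of a measurable set depends
measurably on the base point.
-/

section EssSup

variable {α β γ : Type*} [MeasurableSpace α] [MeasurableSpace β]
  [CompleteLinearOrder γ] [TopologicalSpace γ] [OrderTopology γ]

theorem lt_essSup_iff [FirstCountableTopology γ] {μ : Measure α} {f : α → γ} {a : γ} :
    a < essSup f μ ↔ μ {x | a < f x} ≠ 0 := by
  refine ⟨fun ha hzero => ha.not_ge (essSup_eq_sInf μ f ▸ sInf_le hzero), fun hpos => ?_⟩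
  by_contra! hle
  refine hpos (measure_mono_null (fun x hx => ?_) (meas_essSup_lt (f := f)))
  exact hle.trans_lt hx

theorem Measurable.essSup_restrict_prod_right [SecondCountableTopology γ] [MeasurableSpace γ]
    [BorelSpace γ] {ν : Measure β} [SFinite ν] {f : α × β → γ} (hf : Measurable f)
    {s : Set (α × β)} (hs : MeasurableSet s) :
    Measurable fun x => essSup (fun y => f (x, y)) (ν.restrict (Prod.mk x ⁻¹' s)) := by
  refine measurable_of_Ioi fun a => ?_
  have hsection : ∀ x, ν.restrict (Prod.mk x ⁻¹' s) {y | a < f (x, y)}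
      = ν (Prod.mk x ⁻¹' ({z | a < f z} ∩ s)) :=
    fun x => Measure.restrict_apply' (measurable_prodMk_left hs)
  have hsuperlevel : MeasurableSet {z | a < f z} := hf measurableSet_Ioi
  have hsections := measurable_measure_prodMk_left (ν := ν) (hsuperlevel.inter hs)
  convert hsections (measurableSet_singleton 0).compl using 1
  ext x
  simp only [mem_preimage, mem_Ioi, lt_essSup_iff, hsection, mem_compl_iff, mem_singleton_iff]

end EssSup

theorem measur_osc_general (k : ℕ)
    (g : EuclideanSpace ℝ (Fin k) × ℝ → ℝ) (hg : Measurable g)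
    (ε : ℝ) :
    Measurable (fun q : EuclideanSpace ℝ (Fin k) × ℝ =>
      essSup
        (fun p : EuclideanSpace ℝ (Fin k) × EuclideanSpace ℝ (Fin k) =>
          ENNReal.ofReal |g (p.1, q.2) - g (p.2, q.2)|)
        ((volume : Measure (EuclideanSpace ℝ (Fin k) × EuclideanSpace ℝ (Fin k))).restrict
          (Metric.ball q.1 ε ×ˢ Metric.ball q.1 ε))) := by
  have hballs : MeasurableSet {z : (EuclideanSpace ℝ (Fin k) × ℝ) ×
      (EuclideanSpace ℝ (Fin k) × EuclideanSpace ℝ (Fin k)) |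
        z.2 ∈ Metric.ball z.1.1 ε ×ˢ Metric.ball z.1.1 ε} :=
    (measurableSet_lt (by fun_prop) measurable_const).inter
      (measurableSet_lt (by fun_prop) measurable_const)
  have hosc : Measurable fun z : (EuclideanSpace ℝ (Fin k) × ℝ) ×
      (EuclideanSpace ℝ (Fin k) × EuclideanSpace ℝ (Fin k)) =>
        ENNReal.ofReal |g (z.2.1, z.1.2) - g (z.2.2, z.1.2)| := by
    fun_prop
  exact (hosc.essSup_restrict_prod_right (ν := volume) hballs :)

/-- **Lemma `measur_osc`.** For a jointly measurable `g : ℝ^k × ℝ → ℝ` and `ε > 0`,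
the map `(x, θ) ↦ osc(g(·, θ), B_ε(x))`, where the oscillation is the essential
supremum (for the Lebesgue measure on `ℝ^k × ℝ^k`) of `|g(y, θ) − g(z, θ)|` over
`(y, z) ∈ B_ε(x) × B_ε(x)`, with values in `[0, ∞]`, is measurable. -/
theorem measur_osc (k : ℕ) (hk : 1 ≤ k)
    (g : EuclideanSpace ℝ (Fin k) × ℝ → ℝ) (hg : Measurable g)
    (ε : ℝ) (hε : 0 < ε) :
    Measurable (fun q : EuclideanSpace ℝ (Fin k) × ℝ =>
      essSup
        (fun p : EuclideanSpace ℝ (Fin k) × EuclideanSpace ℝ (Fin k) =>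
          ENNReal.ofReal |g (p.1, q.2) - g (p.2, q.2)|)
        ((volume : Measure (EuclideanSpace ℝ (Fin k) × EuclideanSpace ℝ (Fin k))).restrict
          (Metric.ball q.1 ε ×ˢ Metric.ball q.1 ε))) :=
  measur_osc_general k g hg ε
end

section
/- The map y ∈ Y ↦ esssup_{x ∈ A} g(x, y) is measurable, and esssup_{x ∈ A} ( ∫_Y g(x, y) dμ_Y(y) ) ≤ ∫_Y ( esssup_{x ∈ A} g(x, y) ) dμ_Y(y). (The essential-supremum/integral exchange inequality (ineg_supess_int).) -/
/-!
For fixed `c`, the sublevel set `{y | esssup_x f(x, y) ≤ c}` is `{y | μ {x | c < f(x, y)} = 0}`,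
which is measurable because slice measures depend measurably on `y`. For the inequality: for
every `y`, `f(x, y) ≤ esssup_x f(x, y)` for a.e. `x`; exchanging the two almost-everywhere
quantifiers (Fubini for null sets) gives, for a.e. `x`, this bound for a.e. `y`, and one
integrates in `y`.
-/

open MeasureTheory Set

open scoped ENNReal

section

variable {α β : Type*} [MeasurableSpace α] [MeasurableSpace β]

lemma ENNReal.essSup_le_iff {μ : Measure α} {f : α → ℝ≥0∞} {c : ℝ≥0∞} :
    essSup f μ ≤ c ↔ ∀ᵐ x ∂μ, f x ≤ c :=
  ⟨fun h => (ENNReal.ae_le_essSup f).mono fun _ hx => hx.trans h, essSup_le_of_ae_le c⟩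

theorem Measurable.essSup_prod_left {μ : Measure α} [SFinite μ] {f : α × β → ℝ≥0∞}
    (hf : Measurable f) : Measurable fun y => essSup (fun x => f (x, y)) μ := by
  refine measurable_of_Iic fun c => ?_
  have hsublevel : (fun y => essSup (fun x => f (x, y)) μ) ⁻¹' Iic c
      = (fun y => μ ((fun x => (x, y)) ⁻¹' {p | c < f p})) ⁻¹' {0} := by
    ext y
    simp [ENNReal.essSup_le_iff, ae_iff]
  rw [hsublevel]
  exact measurable_measure_prodMk_right (measurableSet_lt measurable_const hf)
    (measurableSet_singleton 0)

theorem essSup_lintegral_le_lintegral_essSup (μ : Measure α) (ν : Measure β)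
    [SFinite μ] [SFinite ν] {f : α × β → ℝ≥0∞} (hf : Measurable f) :
    essSup (fun x => ∫⁻ y, f (x, y) ∂ν) μ ≤ ∫⁻ y, essSup (fun x => f (x, y)) μ ∂ν := by
  have hmeas : MeasurableSet {p : α × β | f p ≤ essSup (fun x => f (x, p.2)) μ} :=
    measurableSet_le hf (hf.essSup_prod_left.comp measurable_snd)
  have hle : ∀ᵐ x ∂μ, ∀ᵐ y ∂ν, f (x, y) ≤ essSup (fun x' => f (x', y)) μ := by
    rw [Measure.ae_ae_comm hmeas]
    exact ae_of_all _ fun _ => ENNReal.ae_le_essSup _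
  refine essSup_le_of_ae_le _ ?_
  filter_upwards [hle] with x hx using lintegral_mono_ae hx

end

theorem ineg_supess_int_general {X Y : Type*} [MeasurableSpace X] [MeasurableSpace Y]
    (μX : Measure X) (μY : Measure Y) [SigmaFinite μX] [SigmaFinite μY]
    (g : X × Y → ℝ) (hgmeas : Measurable g) (A : Set X) :
    Measurable (fun y => essSup (fun x => ENNReal.ofReal (g (x, y))) (μX.restrict A)) ∧
    essSup (fun x => ∫⁻ y, ENNReal.ofReal (g (x, y)) ∂μY) (μX.restrict A)
      ≤ ∫⁻ y, essSup (fun x => ENNReal.ofReal (g (x, y))) (μX.restrict A) ∂μY := by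
  have hf : Measurable fun p => ENNReal.ofReal (g p) := hgmeas.ennreal_ofReal
  have hineq := essSup_lintegral_le_lintegral_essSup (μX.restrict A) μY hf
  exact ⟨hf.essSup_prod_left, hineq⟩

/-- **Inequality (ineg_supess_int).** For σ-finite measure spaces, a nonnegative,
integrable, essentially bounded jointly measurable `g` on `X × Y`, and `A ∈ 𝒯_X` with
`μ_X(A) > 0`: the map `y ↦ esssup_{x ∈ A} g(x, y)` is measurable and
`esssup_{x ∈ A} ∫_Y g(x, y) dμ_Y ≤ ∫_Y esssup_{x ∈ A} g(x, y) dμ_Y`. -/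
theorem ineg_supess_int {X Y : Type*} [MeasurableSpace X] [MeasurableSpace Y]
    (μX : Measure X) (μY : Measure Y) [SigmaFinite μX] [SigmaFinite μY]
    (g : X × Y → ℝ) (hgmeas : Measurable g) (hg0 : ∀ p, 0 ≤ g p)
    (hgint : Integrable g (μX.prod μY))
    (C : ℝ) (hgbdd : ∀ᵐ p ∂(μX.prod μY), g p ≤ C)
    (A : Set X) (hA : MeasurableSet A) (hApos : 0 < μX A) :
    Measurable (fun y => essSup (fun x => ENNReal.ofReal (g (x, y))) (μX.restrict A)) ∧
    essSup (fun x => ∫⁻ y, ENNReal.ofReal (g (x, y)) ∂μY) (μX.restrict A)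
      ≤ ∫⁻ y, essSup (fun x => ENNReal.ofReal (g (x, y))) (μX.restrict A) ∂μY :=
  ineg_supess_int_general μX μY g hgmeas A
end

section
/- Assume there exist η ∈ (0, 1) and D > 0 such that for every θ ∈ ℝ and every f ∈ V₁(Ω) one has |P_θ f|₁ ≤ η|f|₁ + D‖f‖_{L¹}. Then for every f ∈ V₁(Ω), Pf belongs to V₁(Ω) and ‖Pf‖_{V₁} ≤ η‖f‖_{V₁} + C‖f‖_{L¹} with C = D + 1 − η. (The uniform Lasota–Yorke inequality passes to the averaged transfer operator.) -/
open MeasureTheory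

/-- The oscillation `osc(f, A)` of `f` over `A`, as the essential supremum of
`|f(y) − f(z)|` over `(y, z) ∈ A × A`, valued in `[0, ∞]`. -/
noncomputable def osc1 {k : ℕ} (f : EuclideanSpace ℝ (Fin k) → ℝ)
    (A : Set (EuclideanSpace ℝ (Fin k))) : ENNReal :=
  essSup
    (fun p : EuclideanSpace ℝ (Fin k) × EuclideanSpace ℝ (Fin k) =>
      ENNReal.ofReal |f p.1 - f p.2|)
    ((volume : Measure (EuclideanSpace ℝ (Fin k) × EuclideanSpace ℝ (Fin k))).restrict
      (A ×ˢ A))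

/-- The seminorm `|f|₁ = sup_{0 < ε < ε₀} ε⁻¹ ∫ osc(f, B_ε(x)) dx`, valued in `[0, ∞]`. -/
noncomputable def seminorm1 {k : ℕ} (ε₀ : ℝ)
    (f : EuclideanSpace ℝ (Fin k) → ℝ) : ENNReal :=
  ⨆ ε ∈ Set.Ioo (0 : ℝ) ε₀, (ENNReal.ofReal ε)⁻¹ * ∫⁻ x, osc1 f (Metric.ball x ε)

/-- The `L¹`-norm `‖f‖₁ = ∫ |f|`, valued in `[0, ∞]`. -/
noncomputable def l1norm {k : ℕ} (f : EuclideanSpace ℝ (Fin k) → ℝ) : ENNReal :=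
  ∫⁻ x, ENNReal.ofReal |f x|

/-- Membership in `V₁(Ω)`: integrable, (essentially) supported in `Ω`, and `|f|₁ < ∞`. -/
def memV1 {k : ℕ} (Ω : Set (EuclideanSpace ℝ (Fin k))) (ε₀ : ℝ)
    (f : EuclideanSpace ℝ (Fin k) → ℝ) : Prop :=
  Integrable f volume ∧ (∀ᵐ x ∂volume, x ∉ Ω → f x = 0) ∧ seminorm1 ε₀ f < ⊤

/-! Write `Pf(y) = ∫ Q f (y, θ) dρ(θ)` with the probability measure `ρ = H dθ`. Minkowski's
integral inequality gives `‖Pf‖₁ ≤ ∫ ‖P_θ f‖₁ dρ ≤ ‖f‖₁`, and on every ball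
`osc(Pf, B) ≤ ∫ osc(P_θ f, B) dρ`; integrating over the centres and exchanging the integrals
(Tonelli) gives `|Pf|₁ ≤ sup_θ |P_θ f|₁ ≤ η|f|₁ + D‖f‖₁`. Adding the two bounds gives the claim,
since `‖f‖₁ + η|f|₁ + D‖f‖₁ = η‖f‖_{V₁} + (D + 1 − η)‖f‖₁`.

Exchanging the integrals needs `(x, θ) ↦ osc(Q f (·, θ), B_ε(x))` to be jointly measurable; this
holds because the essential supremum in one variable of a jointly measurable function is
measurable in the other. -/

open MeasureTheory Filter
open scoped ENNReal

local notation "ℝ^" k:max => EuclideanSpace ℝ (Fin k)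

section EssSup

variable {α β : Type*} [MeasurableSpace α] [MeasurableSpace β]

theorem essSup_le_iff_measure_lt_eq_zero {ν : Measure α} {f : α → ℝ≥0∞} {c : ℝ≥0∞} :
    essSup f ν ≤ c ↔ ν {a | c < f a} = 0 := by
  refine ⟨fun h => ?_, fun h => essSup_le_of_ae_le c ?_⟩
  · refine measure_mono_null (fun a ha => ?_) (ae_iff.mp (ENNReal.ae_le_essSup (μ := ν) f))
    exact not_le.mpr (h.trans_lt ha)
  · simpa [EventuallyLE, ae_iff, not_le] using h

theorem Measurable.essSup_prod_left_s15 {ν : Measure α} [SFinite ν] {g : α × β → ℝ≥0∞}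
    (hg : Measurable g) : Measurable fun b => essSup (fun a => g (a, b)) ν := by
  refine measurable_of_Iic fun c => ?_
  have hnull : Measurable fun b => ν {a | c < g (a, b)} :=
    measurable_measure_prodMk_right (measurableSet_lt measurable_const hg)
  simpa only [Set.preimage, Set.mem_Iic, Set.mem_singleton_iff,
    essSup_le_iff_measure_lt_eq_zero] using
    hnull (measurableSet_singleton 0)

end EssSup

section Seminorm

variable {k : ℕ} {f₁ f₂ : ℝ^k → ℝ}

theorem osc1_congr_ae (h : f₁ =ᵐ[volume] f₂) (A : Set (ℝ^k)) : osc1 f₁ A = osc1 f₂ A := by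
  refine essSup_congr_ae (ae_restrict_of_ae ?_)
  rw [Measure.volume_eq_prod]
  filter_upwards [Measure.quasiMeasurePreserving_fst.ae h,
    Measure.quasiMeasurePreserving_snd.ae h] with p h₁ h₂
  rw [h₁, h₂]

theorem seminorm1_congr_ae (h : f₁ =ᵐ[volume] f₂) (ε₀ : ℝ) :
    seminorm1 ε₀ f₁ = seminorm1 ε₀ f₂ := by
  simp only [seminorm1, osc1_congr_ae h]

theorem l1norm_congr_ae (h : f₁ =ᵐ[volume] f₂) : l1norm f₁ = l1norm f₂ :=
  lintegral_congr_ae (h.mono fun x hx => by simp only [hx])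

theorem l1norm_eq_lintegral_enorm (f : ℝ^k → ℝ) : l1norm f = ∫⁻ x, ‖f x‖ₑ := by
  simp only [l1norm, Real.enorm_eq_ofReal_abs]

theorem integrable_iff_l1norm_lt_top {f : ℝ^k → ℝ} (hf : AEStronglyMeasurable f volume) :
    Integrable f volume ↔ l1norm f < ⊤ := by
  rw [l1norm_eq_lintegral_enorm]
  exact ⟨fun h => h.2, fun h => ⟨hf, h⟩⟩

theorem le_seminorm1 {ε₀ ε : ℝ} (hε : ε ∈ Set.Ioo 0 ε₀) (f : ℝ^k → ℝ) :
    (ENNReal.ofReal ε)⁻¹ * ∫⁻ x, osc1 f (Metric.ball x ε) ≤ seminorm1 ε₀ f :=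
  le_iSup₂ (f := fun ε (_ : ε ∈ Set.Ioo 0 ε₀) =>
    (ENNReal.ofReal ε)⁻¹ * ∫⁻ x, osc1 f (Metric.ball x ε)) ε hε

end Seminorm

section Average

variable {Θ : Type*} [MeasurableSpace Θ] {ρ : Measure Θ}

theorem ae_integral_eq_zero_of_forall_ae {X : Type*} [MeasurableSpace X] {μ : Measure X}
    [SFinite μ] [SFinite ρ] {g : X × Θ → ℝ} (hg : Measurable g) {s : Set X}
    (hs : MeasurableSet s) (h : ∀ θ, ∀ᵐ x ∂μ, x ∈ s → g (x, θ) = 0) :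
    ∀ᵐ x ∂μ, x ∈ s → ∫ θ, g (x, θ) ∂ρ = 0 := by
  have hmeas : MeasurableSet {r : X × Θ | r.1 ∈ s → g r = 0} := by
    convert (measurable_fst hs).compl.union (hg (measurableSet_singleton 0)) using 1
    ext r
    exact imp_iff_not_or
  filter_upwards [(Measure.ae_ae_comm hmeas).mpr (ae_of_all ρ h)] with x hx hxs
  exact integral_eq_zero_of_ae (hx.mono fun θ hθ => hθ hxs)

variable {k : ℕ} {g : ℝ^k × Θ → ℝ}

theorem l1norm_integral_le_lintegral [SFinite ρ] (hg : Measurable g) :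
    l1norm (fun y => ∫ θ, g (y, θ) ∂ρ) ≤ ∫⁻ θ, l1norm (fun y => g (y, θ)) ∂ρ := by
  simp only [l1norm_eq_lintegral_enorm]
  calc ∫⁻ y, ‖∫ θ, g (y, θ) ∂ρ‖ₑ ≤ ∫⁻ y, ∫⁻ θ, ‖g (y, θ)‖ₑ ∂ρ :=
        lintegral_mono fun y => enorm_integral_le_lintegral_enorm _
    _ = ∫⁻ θ, (∫⁻ y, ‖g (y, θ)‖ₑ) ∂ρ := lintegral_lintegral_swap hg.enorm.aemeasurable

theorem ae_integrable_of_lintegral_l1norm_ne_top [SFinite ρ] (hg : Measurable g)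
    (h : ∫⁻ θ, l1norm (fun y => g (y, θ)) ∂ρ ≠ ∞) :
    ∀ᵐ (y : ℝ^k), Integrable (fun θ => g (y, θ)) ρ := by
  simp only [l1norm_eq_lintegral_enorm] at h
  rw [← lintegral_lintegral_swap hg.enorm.aemeasurable] at h
  filter_upwards [ae_lt_top hg.enorm.lintegral_prod_right' h] with y hy
  exact ⟨(hg.comp measurable_prodMk_left).aestronglyMeasurable, hy⟩

theorem osc1_integral_le [SFinite ρ] (hg : Measurable g)
    (hint : ∀ᵐ (y : ℝ^k), Integrable (fun θ => g (y, θ)) ρ) {A : Set (ℝ^k)} :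
    osc1 (fun y => ∫ θ, g (y, θ) ∂ρ) A ≤ ∫⁻ θ, osc1 (fun y => g (y, θ)) A ∂ρ := by
  set μA := (volume : Measure (ℝ^k × ℝ^k)).restrict (A ×ˢ A)
  have hdiff : Measurable fun r : (ℝ^k × ℝ^k) × Θ =>
      ENNReal.ofReal |g (r.1.1, r.2) - g (r.1.2, r.2)| := by fun_prop
  have hosc : Measurable fun θ => osc1 (fun y => g (y, θ)) A :=
    hdiff.essSup_prod_left_s15 (ν := μA)
  have hdom_slice : ∀ θ, ∀ᵐ p ∂μA,
      ENNReal.ofReal |g (p.1, θ) - g (p.2, θ)| ≤ osc1 (fun y => g (y, θ)) A :=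
    fun θ => ENNReal.ae_le_essSup _
  have hdom_meas : MeasurableSet {r : (ℝ^k × ℝ^k) × Θ |
      ENNReal.ofReal |g (r.1.1, r.2) - g (r.1.2, r.2)| ≤ osc1 (fun y => g (y, r.2)) A} :=
    measurableSet_le hdiff (hosc.comp measurable_snd)
  have hdom : ∀ᵐ p ∂μA, ∀ᵐ θ ∂ρ,
      ENNReal.ofReal |g (p.1, θ) - g (p.2, θ)| ≤ osc1 (fun y => g (y, θ)) A :=
    (Measure.ae_ae_comm hdom_meas).mpr (ae_of_all ρ hdom_slice)
  have hint₂ : ∀ᵐ p ∂μA,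
      Integrable (fun θ => g (p.1, θ)) ρ ∧ Integrable (fun θ => g (p.2, θ)) ρ := by
    refine ae_restrict_of_ae ?_
    rw [Measure.volume_eq_prod]
    exact (Measure.quasiMeasurePreserving_fst.ae hint).and
      (Measure.quasiMeasurePreserving_snd.ae hint)
  refine essSup_le_of_ae_le _ ?_
  filter_upwards [hint₂, hdom] with p ⟨h₁, h₂⟩ hp
  calc ENNReal.ofReal |(∫ θ, g (p.1, θ) ∂ρ) - ∫ θ, g (p.2, θ) ∂ρ|
      = ‖∫ θ, (g (p.1, θ) - g (p.2, θ)) ∂ρ‖ₑ := by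
        rw [integral_sub h₁ h₂, Real.enorm_eq_ofReal_abs]
    _ ≤ ∫⁻ θ, ‖g (p.1, θ) - g (p.2, θ)‖ₑ ∂ρ := enorm_integral_le_lintegral_enorm _
    _ ≤ ∫⁻ θ, osc1 (fun y => g (y, θ)) A ∂ρ :=
        lintegral_mono_ae (hp.mono fun θ hθ => by rwa [Real.enorm_eq_ofReal_abs])

theorem measurable_osc1_ball (hg : Measurable g) (ε : ℝ) :
    Measurable fun r : ℝ^k × Θ => osc1 (fun y => g (y, r.2)) (Metric.ball r.1 ε) := by
  set S : Set ((ℝ^k × ℝ^k) × (ℝ^k × Θ)) :=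
    {s | dist s.1.1 s.2.1 < ε ∧ dist s.1.2 s.2.1 < ε}
  have hS : MeasurableSet S :=
    (measurableSet_lt (f := fun s : (ℝ^k × ℝ^k) × (ℝ^k × Θ) => dist s.1.1 s.2.1)
      (by fun_prop) measurable_const).inter
      (measurableSet_lt (f := fun s : (ℝ^k × ℝ^k) × (ℝ^k × Θ) => dist s.1.2 s.2.1)
        (by fun_prop) measurable_const)
  have hG : Measurable (S.indicator fun s =>
      ENNReal.ofReal |g (s.1.1, s.2.2) - g (s.1.2, s.2.2)|) :=
    (by fun_prop : Measurable _).indicator hS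
  convert hG.essSup_prod_left_s15 (ν := volume) using 2 with r
  rw [osc1, ← ENNReal.essSup_indicator_eq_essSup_restrict
    (measurableSet_ball.prod measurableSet_ball)]
  rfl

theorem seminorm1_integral_le [IsProbabilityMeasure ρ] (hg : Measurable g)
    (hint : ∀ᵐ (y : ℝ^k), Integrable (fun θ => g (y, θ)) ρ) {ε₀ : ℝ} {C : ℝ≥0∞}
    (hC : ∀ θ, seminorm1 ε₀ (fun y => g (y, θ)) ≤ C) :
    seminorm1 ε₀ (fun y => ∫ θ, g (y, θ) ∂ρ) ≤ C := by
  refine iSup₂_le fun ε hε => ?_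
  have hε_inv : (ENNReal.ofReal ε)⁻¹ ≠ ∞ :=
    ENNReal.inv_ne_top.mpr (ENNReal.ofReal_pos.mpr hε.1).ne'
  calc (ENNReal.ofReal ε)⁻¹ * ∫⁻ x, osc1 (fun y => ∫ θ, g (y, θ) ∂ρ) (Metric.ball x ε)
      ≤ (ENNReal.ofReal ε)⁻¹ * ∫⁻ x, ∫⁻ θ, osc1 (fun y => g (y, θ)) (Metric.ball x ε) ∂ρ := by
        gcongr with x
        exact osc1_integral_le hg hint
    _ = ∫⁻ θ, (ENNReal.ofReal ε)⁻¹ * (∫⁻ x, osc1 (fun y => g (y, θ)) (Metric.ball x ε)) ∂ρ := by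
        rw [lintegral_const_mul' _ _ hε_inv,
          lintegral_lintegral_swap (measurable_osc1_ball hg ε).aemeasurable]
    _ ≤ ∫⁻ _, C ∂ρ := lintegral_mono fun θ => (le_seminorm1 hε _).trans (hC θ)
    _ = C := by simp

end Average

section Density

variable {X : Type*} [MeasurableSpace X] {μ : Measure X} {H : X → ℝ}

theorem isProbabilityMeasure_withDensity_ofReal (hH0 : ∀ x, 0 ≤ H x) (hH1 : ∫ x, H x ∂μ = 1) :
    IsProbabilityMeasure (μ.withDensity fun x => ENNReal.ofReal (H x)) := by
  have hH : Integrable H μ := .of_integral_ne_zero (by simp [hH1])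
  constructor
  rw [withDensity_apply _ MeasurableSet.univ, Measure.restrict_univ,
    ← ofReal_integral_eq_lintegral_ofReal hH (ae_of_all _ hH0), hH1, ENNReal.ofReal_one]

theorem integral_withDensity_ofReal_eq_integral_mul (hH : Measurable H) (hH0 : ∀ x, 0 ≤ H x)
    (φ : X → ℝ) :
    ∫ x, φ x ∂μ.withDensity (fun x => ENNReal.ofReal (H x)) = ∫ x, H x * φ x ∂μ := by
  rw [integral_withDensity_eq_integral_toReal_smul hH.ennreal_ofReal
    (ae_of_all _ fun _ => ENNReal.ofReal_lt_top)]
  simp only [ENNReal.toReal_ofReal (hH0 _), smul_eq_mul]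

end Density

theorem ofReal_mul_add_add_ofReal_sub_mul {η D : ℝ} (hη₀ : 0 ≤ η) (hη₁ : η ≤ 1) (hD : 0 ≤ D)
    (a b : ℝ≥0∞) :
    ENNReal.ofReal η * (a + b) + ENNReal.ofReal (D + 1 - η) * a
      = a + (ENNReal.ofReal η * b + ENNReal.ofReal D * a) := by
  have hsum : ENNReal.ofReal η + ENNReal.ofReal (D + 1 - η) = ENNReal.ofReal D + 1 := by
    rw [← ENNReal.ofReal_add hη₀ (by linarith), ← ENNReal.ofReal_one,
      ← ENNReal.ofReal_add hD zero_le_one]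
    ring_nf
  calc ENNReal.ofReal η * (a + b) + ENNReal.ofReal (D + 1 - η) * a
      = (ENNReal.ofReal η + ENNReal.ofReal (D + 1 - η)) * a + ENNReal.ofReal η * b := by ring
    _ = a + (ENNReal.ofReal η * b + ENNReal.ofReal D * a) := by rw [hsum]; ring

theorem averaged_lasota_yorke_general (k : ℕ)
    (Ω : Set (EuclideanSpace ℝ (Fin k))) (hΩcomp : IsCompact Ω)
    (ε₀ : ℝ)
    (Pθ : ℝ → (EuclideanSpace ℝ (Fin k) → ℝ) → (EuclideanSpace ℝ (Fin k) → ℝ))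
    (hPcontr : ∀ θ f, Integrable f volume → l1norm (Pθ θ f) ≤ l1norm f)
    (hPsupp : ∀ θ f, memV1 Ω ε₀ f → ∀ᵐ x ∂volume, x ∉ Ω → Pθ θ f x = 0)
    (H : ℝ → ℝ) (hHmeas : Measurable H) (hH0 : ∀ θ, 0 ≤ H θ) (hH1 : ∫ θ, H θ = 1)
    (Q : (EuclideanSpace ℝ (Fin k) → ℝ) → EuclideanSpace ℝ (Fin k) × ℝ → ℝ)
    (hQmeas : ∀ f, Integrable f volume → Measurable (Q f))
    (hQ : ∀ f, Integrable f volume → ∀ θ, (fun y => Q f (y, θ)) =ᵐ[volume] Pθ θ f)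
    (P : (EuclideanSpace ℝ (Fin k) → ℝ) → EuclideanSpace ℝ (Fin k) → ℝ)
    (hP : ∀ f, P f = fun y => ∫ θ, H θ * Q f (y, θ))
    (η D : ℝ) (hη : η ∈ Set.Ioo (0 : ℝ) 1) (hD : 0 < D)
    (hLY : ∀ θ f, memV1 Ω ε₀ f →
      seminorm1 ε₀ (Pθ θ f)
        ≤ ENNReal.ofReal η * seminorm1 ε₀ f + ENNReal.ofReal D * l1norm f) :
    ∀ f, memV1 Ω ε₀ f →
      memV1 Ω ε₀ (P f) ∧
      l1norm (P f) + seminorm1 ε₀ (P f)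
        ≤ ENNReal.ofReal η * (l1norm f + seminorm1 ε₀ f)
          + ENNReal.ofReal (D + 1 - η) * l1norm f := by
  intro f hf
  have hf_int : Integrable f := hf.1
  set ρ := volume.withDensity fun θ => ENNReal.ofReal (H θ)
  have : IsProbabilityMeasure ρ := isProbabilityMeasure_withDensity_ofReal hH0 hH1
  have hg : Measurable (Q f) := hQmeas f hf_int
  have hPf : P f = fun y => ∫ θ, Q f (y, θ) ∂ρ := by
    simp only [hP, integral_withDensity_ofReal_eq_integral_mul hHmeas hH0, ρ]
  have hf_l1 : l1norm f < ∞ := (integrable_iff_l1norm_lt_top hf_int.1).mp hf_int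
  have hslice_l1 : ∫⁻ θ, l1norm (fun y => Q f (y, θ)) ∂ρ ≤ l1norm f :=
    (lintegral_mono fun θ => (l1norm_congr_ae (hQ f hf_int θ)).trans_le
      (hPcontr θ f hf_int)).trans_eq (by simp)
  have hint := ae_integrable_of_lintegral_l1norm_ne_top hg (hslice_l1.trans_lt hf_l1).ne
  have hPf_l1 : l1norm (P f) ≤ l1norm f :=
    hPf ▸ (l1norm_integral_le_lintegral hg).trans hslice_l1
  have hPf_sem : seminorm1 ε₀ (P f)
      ≤ ENNReal.ofReal η * seminorm1 ε₀ f + ENNReal.ofReal D * l1norm f :=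
    hPf ▸ seminorm1_integral_le hg hint fun θ =>
      (seminorm1_congr_ae (hQ f hf_int θ) ε₀).trans_le (hLY θ f hf)
  refine ⟨⟨?_, ?_, ?_⟩, ?_⟩
  · refine (integrable_iff_l1norm_lt_top ?_).mpr (hPf_l1.trans_lt hf_l1)
    exact hPf ▸ hg.stronglyMeasurable.integral_prod_right'.aestronglyMeasurable
  · rw [hPf]
    refine ae_integral_eq_zero_of_forall_ae hg hΩcomp.measurableSet.compl fun θ => ?_
    filter_upwards [hPsupp θ f hf, hQ f hf_int θ] with x hPθ hQθ hx
    exact hQθ.trans (hPθ hx)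
  · exact hPf_sem.trans_lt (by have := hf.2.2; finiteness)
  · rw [ofReal_mul_add_add_ofReal_sub_mul hη.1.le hη.2.le hD.le]
    exact add_le_add hPf_l1 hPf_sem

/-- **Lasota–Yorke inequality for the averaged transfer operator.** If each `P_θ`
satisfies `|P_θ f|₁ ≤ η|f|₁ + D‖f‖₁` on `V₁(Ω)` with constants independent of `θ`, then
for every `f ∈ V₁(Ω)` the averaged operator satisfies `Pf ∈ V₁(Ω)` and
`‖Pf‖_{V₁} ≤ η‖f‖_{V₁} + C‖f‖₁` with `C = D + 1 − η`. -/
theorem averaged_lasota_yorke (k : ℕ) (hk : 1 ≤ k)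
    (Ω : Set (EuclideanSpace ℝ (Fin k))) (hΩcomp : IsCompact Ω)
    (hΩpos : 0 < volume Ω)
    (ε₀ : ℝ) (hε₀ : 0 < ε₀)
    (Pθ : ℝ → (EuclideanSpace ℝ (Fin k) → ℝ) → (EuclideanSpace ℝ (Fin k) → ℝ))
    (hPint : ∀ θ f, Integrable f volume → Integrable (Pθ θ f) volume)
    (hPpos : ∀ θ f, Integrable f volume → 0 ≤ᵐ[volume] f → 0 ≤ᵐ[volume] Pθ θ f)
    (hPnorm : ∀ θ f, Integrable f volume → 0 ≤ᵐ[volume] f →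
      ∫ x, |Pθ θ f x| = ∫ x, |f x|)
    (hPcontr : ∀ θ f, Integrable f volume → l1norm (Pθ θ f) ≤ l1norm f)
    (hPsupp : ∀ θ f, memV1 Ω ε₀ f → ∀ᵐ x ∂volume, x ∉ Ω → Pθ θ f x = 0)
    (H : ℝ → ℝ) (hHmeas : Measurable H) (hH0 : ∀ θ, 0 ≤ H θ) (hH1 : ∫ θ, H θ = 1)
    (Q : (EuclideanSpace ℝ (Fin k) → ℝ) → EuclideanSpace ℝ (Fin k) × ℝ → ℝ)
    (hQmeas : ∀ f, Integrable f volume → Measurable (Q f))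
    (hQ : ∀ f, Integrable f volume → ∀ θ, (fun y => Q f (y, θ)) =ᵐ[volume] Pθ θ f)
    (P : (EuclideanSpace ℝ (Fin k) → ℝ) → EuclideanSpace ℝ (Fin k) → ℝ)
    (hP : ∀ f, P f = fun y => ∫ θ, H θ * Q f (y, θ))
    (η D : ℝ) (hη : η ∈ Set.Ioo (0 : ℝ) 1) (hD : 0 < D)
    (hLY : ∀ θ f, memV1 Ω ε₀ f →
      seminorm1 ε₀ (Pθ θ f)
        ≤ ENNReal.ofReal η * seminorm1 ε₀ f + ENNReal.ofReal D * l1norm f) :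
    ∀ f, memV1 Ω ε₀ f →
      memV1 Ω ε₀ (P f) ∧
      l1norm (P f) + seminorm1 ε₀ (P f)
        ≤ ENNReal.ofReal η * (l1norm f + seminorm1 ε₀ f)
          + ENNReal.ofReal (D + 1 - η) * l1norm f :=
  averaged_lasota_yorke_general k Ω hΩcomp ε₀ Pθ hPcontr hPsupp H hHmeas hH0 hH1 Q hQmeas hQ P hP η
    D hη hD hLY
end

section
/- The product measure ν^(⊗ℕ) ⊗ μ on ℝ^ℕ × Ω, where μ is the measure with density h with respect to m, is invariant under the skew-product map F : ℝ^ℕ × Ω → ℝ^ℕ × Ω defined by F(ϑ, x) = (𝒮ϑ, T_{ϑ₀}(x)), where 𝒮 is the left shift on ℝ^ℕ and ϑ₀ is the first coordinate of ϑ; i.e. (ν^(⊗ℕ) ⊗ μ)(F^(−1)(C)) = (ν^(⊗ℕ) ⊗ μ)(C) for every measurable C ⊆ ℝ^ℕ × Ω. (The invariance assertion of Theorem 'th-inv-meas'.) -/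
/-! Writing `ϑ = (ϑ₀, 𝒮ϑ)`, the product measure `ν^{⊗ℕ}` is carried to `ν ⊗ ν^{⊗ℕ}`, so the
skew product is measure preserving as soon as the random map `(θ, x) ↦ T_θ x` carries `ν ⊗ μ` to
`μ`. The latter is the fixed-point equation for `h`: the transfer operator gives the density
`P_θ h` of the image of `μ` under `T_θ`, and averaging over `θ` returns `h`. The inequality
`ofReal (∫ P_θ h dν) ≤ ∫⁻ ofReal (P_θ h) dν` already suffices: it bounds `μ` by the image of
`ν ⊗ μ`, and two comparable finite measures of equal total mass coincide. -/

open MeasureTheory Set Function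

namespace MeasureTheory

theorem preimage_head_tail_prod_pi {α : Type*} (A : Set α) (s : Finset ℕ) (t : ℕ → Set α) :
    (fun ϑ : ℕ → α => (ϑ 0, fun n => ϑ (n + 1))) ⁻¹' (A ×ˢ (s : Set ℕ).pi t) =
      ((insert 0 (s.map (addRightEmbedding 1)) : Finset ℕ) : Set ℕ).pi
        fun n => if n = 0 then A else t (n - 1) := by
  ext ϑ
  simp

variable {α β Θ Ψ Ω : Type*} [MeasurableSpace α] [MeasurableSpace β] [MeasurableSpace Θ]
  [MeasurableSpace Ψ] [MeasurableSpace Ω]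

theorem measurePreserving_head_tail_infinitePi (ν : Measure α) [IsProbabilityMeasure ν] :
    MeasurePreserving (fun ϑ : ℕ → α => (ϑ 0, fun n => ϑ (n + 1)))
      (Measure.infinitePi fun _ => ν) (ν.prod (Measure.infinitePi fun _ => ν)) := by
  refine ⟨by fun_prop, (Measure.prod_eq_generateFrom MeasurableSpace.generateFrom_measurableSet
    generateFrom_squareCylinders MeasurableSpace.isPiSystem_measurableSet
    (isPiSystem_squareCylinders (fun _ => MeasurableSpace.isPiSystem_measurableSet) fun _ => .univ)
    ν.toFiniteSpanningSetsIn ?_ ?_).symm⟩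
  · exact ⟨fun _ => univ, fun _ => ⟨∅, fun _ => univ, by simp, by simp⟩,
      fun _ => measure_lt_top _ _, iUnion_const _⟩
  · rintro A hA _ ⟨s, t, ht, rfl⟩
    have ht' : ∀ i, MeasurableSet (t i) := fun i => ht i (mem_univ i)
    rw [Measure.map_apply (by fun_prop) (hA.prod (.pi s.countable_toSet fun i _ => ht' i)),
      preimage_head_tail_prod_pi, Measure.infinitePi_pi _ fun n _ => ?_,
      Measure.infinitePi_pi _ fun i _ => ht' i, Finset.prod_insert (by simp), Finset.prod_map]
    · rfl
    · split_ifs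
      exacts [hA, ht' _]

theorem ofReal_integral_le_lintegral_ofReal (μ : Measure α) (f : α → ℝ) :
    ENNReal.ofReal (∫ a, f a ∂μ) ≤ ∫⁻ a, ENNReal.ofReal (f a) ∂μ := by
  by_cases hf : Integrable f μ
  · rw [integral_eq_lintegral_pos_part_sub_lintegral_neg_part hf]
    exact ENNReal.ofReal_le_of_le_toReal (sub_le_self _ ENNReal.toReal_nonneg)
  · simp [integral_undef hf]

theorem map_withDensity_ofReal_eq_of_setIntegral_preimage_eq {m : Measure α} {m' : Measure β}
    {T : α → β} (hT : Measurable T) {f : α → ℝ} {g : β → ℝ} (hf : Integrable f m)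
    (hf₀ : 0 ≤ᵐ[m] f) (hg : Integrable g m')
    (hfg : ∀ A, MeasurableSet A → ∫ x in T ⁻¹' A, f x ∂m = ∫ y in A, g y ∂m') :
    (m.withDensity fun x => ENNReal.ofReal (f x)).map T =
      m'.withDensity fun y => ENNReal.ofReal (g y) := by
  have hg₀ : 0 ≤ᵐ[m'] g := ae_nonneg_of_forall_setIntegral_nonneg hg fun A hA _ =>
    hfg A hA ▸ integral_nonneg_of_ae (ae_restrict_of_ae hf₀)
  ext A hA
  rw [Measure.map_apply hT hA, withDensity_apply _ (hT hA), withDensity_apply _ hA,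
    ← ofReal_integral_eq_lintegral_ofReal hf.restrict (ae_restrict_of_ae hf₀),
    ← ofReal_integral_eq_lintegral_ofReal hg.restrict (ae_restrict_of_ae hg₀), hfg A hA]

theorem measurePreserving_uncurry_of_map_withDensity {ν : Measure Θ} [IsProbabilityMeasure ν]
    {m : Measure Ω} [SFinite m] {T : Θ → Ω → Ω} (hT : Measurable (uncurry T))
    {h : Ω → ℝ} (hh : Integrable h m) {q : Ω × Θ → ℝ} (hq : Measurable q)
    (hmap : ∀ θ, (m.withDensity fun x => ENNReal.ofReal (h x)).map (T θ) =
      m.withDensity fun x => ENNReal.ofReal (q (x, θ)))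
    (hfix : ∀ᵐ x ∂m, ∫ θ, q (x, θ) ∂ν = h x) :
    MeasurePreserving (uncurry T) (ν.prod (m.withDensity fun x => ENNReal.ofReal (h x)))
      (m.withDensity fun x => ENNReal.ofReal (h x)) := by
  set μ := m.withDensity fun x => ENNReal.ofReal (h x)
  have : IsFiniteMeasure μ := isFiniteMeasure_withDensity_ofReal hh.2
  refine ⟨hT, (Measure.eq_of_le_of_measure_univ_eq
    (Measure.le_intro fun B hB _ => ?_) ?_).symm⟩
  · calc μ B = ∫⁻ x in B, ENNReal.ofReal (∫ θ, q (x, θ) ∂ν) ∂m := by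
          rw [withDensity_apply _ hB]
          exact lintegral_congr_ae (ae_restrict_of_ae (hfix.mono fun x hx => by simp only [hx]))
      _ ≤ ∫⁻ x in B, ∫⁻ θ, ENNReal.ofReal (q (x, θ)) ∂ν ∂m :=
          lintegral_mono fun x => ofReal_integral_le_lintegral_ofReal ν _
      _ = ∫⁻ θ, ∫⁻ x in B, ENNReal.ofReal (q (x, θ)) ∂m ∂ν := lintegral_lintegral_swap
          (ENNReal.measurable_ofReal.comp hq).aemeasurable
      _ = ∫⁻ θ, μ (T θ ⁻¹' B) ∂ν := by
          refine lintegral_congr fun θ => ?_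
          rw [← withDensity_apply _ hB, ← hmap θ, Measure.map_apply hT.of_uncurry_left hB]
      _ = _ := by rw [Measure.map_apply hT hB, Measure.prod_apply (hT hB)]; rfl
  · rw [Measure.map_apply hT MeasurableSet.univ, preimage_univ, ← univ_prod_univ,
      Measure.prod_prod, measure_univ (μ := ν), one_mul]

/-- The skew product factors as
`(ψ, x) ↦ ((θ, ψ'), x) ↦ ((θ, x), ψ') ↦ (T θ x, ψ') ↦ (ψ', T θ x)` with `e ψ = (θ, ψ')`. -/
theorem MeasurePreserving.skew_product_of_uncurry {ρ : Measure Ψ} [SFinite ρ]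
    {ν : Measure Θ} [SFinite ν] {μ : Measure Ω} [SFinite μ] {e : Ψ → Θ × Ψ}
    (he : MeasurePreserving e ρ (ν.prod ρ)) {T : Θ → Ω → Ω}
    (hT : MeasurePreserving (uncurry T) (ν.prod μ) μ) :
    MeasurePreserving (fun p : Ψ × Ω => ((e p.1).2, T (e p.1).1 p.2)) (ρ.prod μ) (ρ.prod μ) :=
  Measure.measurePreserving_swap.comp <| (hT.prod (.id ρ)).comp <|
    (MeasurePreserving.symm _ (measurePreserving_prodAssoc ν μ ρ)).comp <|
    ((MeasurePreserving.id ν).prod Measure.measurePreserving_swap).comp <|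
    (measurePreserving_prodAssoc ν ρ μ).comp <| he.prod (.id μ)

end MeasureTheory

theorem skew_product_invariance_general {Ω : Type*} [MeasurableSpace Ω] (m : Measure Ω)
    [SigmaFinite m]
    (ν : Measure ℝ) [IsProbabilityMeasure ν]
    (T : ℝ → Ω → Ω) (hT : Measurable (fun p : ℝ × Ω => T p.1 p.2))
    (Pθ : ℝ → (Ω → ℝ) → (Ω → ℝ))
    (htrans : ∀ θ f, Integrable f m →
      Integrable (Pθ θ f) m ∧
      ∀ A : Set Ω, MeasurableSet A →
        ∫ x in T θ ⁻¹' A, f x ∂m = ∫ x in A, Pθ θ f x ∂m)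
    (h : Ω → ℝ) (hpos : 0 ≤ h) (hint : Integrable h m)
    (Qh : Ω × ℝ → ℝ) (hQmeas : Measurable Qh)
    (hQ : ∀ θ : ℝ, (fun y => Qh (y, θ)) =ᵐ[m] Pθ θ h)
    (hfix : ∀ᵐ y ∂m, ∫ θ, Qh (y, θ) ∂ν = h y)
    (νN : Measure (ℕ → ℝ))
    (hνN : ∀ (s : Finset ℕ) (A : ℕ → Set ℝ), (∀ i, MeasurableSet (A i)) →
      νN {ϑ | ∀ i ∈ s, ϑ i ∈ A i} = ∏ i ∈ s, ν (A i))
    (μ : Measure Ω) (hμ : μ = m.withDensity fun x => ENNReal.ofReal (h x))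
    (F : (ℕ → ℝ) × Ω → (ℕ → ℝ) × Ω)
    (hF : ∀ ϑ x, F (ϑ, x) = (fun n => ϑ (n + 1), T (ϑ 0) x)) :
    ∀ C : Set ((ℕ → ℝ) × Ω), MeasurableSet C →
      (νN.prod μ) (F ⁻¹' C) = (νN.prod μ) C := by
  obtain rfl : νN = Measure.infinitePi fun _ => ν := Measure.eq_infinitePi _ hνN
  obtain rfl : F = fun p => (fun n => p.1 (n + 1), T (p.1 0) p.2) := funext fun p => hF p.1 p.2
  subst hμ
  have hstationary : MeasurePreserving (uncurry T)
      (ν.prod (m.withDensity fun x => ENNReal.ofReal (h x)))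
      (m.withDensity fun x => ENNReal.ofReal (h x)) := by
    refine measurePreserving_uncurry_of_map_withDensity hT hint hQmeas (fun θ => ?_) hfix
    rw [map_withDensity_ofReal_eq_of_setIntegral_preimage_eq hT.of_uncurry_left hint
      (ae_of_all _ hpos) (htrans θ h hint).1 (htrans θ h hint).2]
    exact withDensity_congr_ae ((hQ θ).symm.fun_comp ENNReal.ofReal)
  intro C hC
  exact ((measurePreserving_head_tail_infinitePi ν).skew_product_of_uncurry
    hstationary).measure_preimage hC.nullMeasurableSet

/-- **Invariance assertion of Theorem `th-inv-meas`.** If `h` is a density fixed (in the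
averaged sense) by the family of transfer operators `P_θ`, then the product measure
`ν^{⊗ℕ} ⊗ μ`, where `μ = h·m`, is invariant under the skew product
`F(ϑ, x) = (𝒮ϑ, T_{ϑ₀}(x))`. -/
theorem skew_product_invariance {Ω : Type*} [MeasurableSpace Ω] (m : Measure Ω)
    [SigmaFinite m]
    (ν : Measure ℝ) [IsProbabilityMeasure ν]
    (T : ℝ → Ω → Ω) (hT : Measurable (fun p : ℝ × Ω => T p.1 p.2))
    (Pθ : ℝ → (Ω → ℝ) → (Ω → ℝ))
    (htrans : ∀ θ f, Integrable f m →
      Integrable (Pθ θ f) m ∧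
      ∀ A : Set Ω, MeasurableSet A →
        ∫ x in T θ ⁻¹' A, f x ∂m = ∫ x in A, Pθ θ f x ∂m)
    (h : Ω → ℝ) (hmeas : Measurable h) (hpos : 0 ≤ h) (hint : Integrable h m)
    (hnorm : ∫ x, h x ∂m = 1)
    (Qh : Ω × ℝ → ℝ) (hQmeas : Measurable Qh)
    (hQ : ∀ θ : ℝ, (fun y => Qh (y, θ)) =ᵐ[m] Pθ θ h)
    (hfix : ∀ᵐ y ∂m, ∫ θ, Qh (y, θ) ∂ν = h y)
    (νN : Measure (ℕ → ℝ))
    (hνN : ∀ (s : Finset ℕ) (A : ℕ → Set ℝ), (∀ i, MeasurableSet (A i)) →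
      νN {ϑ | ∀ i ∈ s, ϑ i ∈ A i} = ∏ i ∈ s, ν (A i))
    (μ : Measure Ω) (hμ : μ = m.withDensity fun x => ENNReal.ofReal (h x))
    (F : (ℕ → ℝ) × Ω → (ℕ → ℝ) × Ω)
    (hF : ∀ ϑ x, F (ϑ, x) = (fun n => ϑ (n + 1), T (ϑ 0) x)) :
    ∀ C : Set ((ℕ → ℝ) × Ω), MeasurableSet C →
      (νN.prod μ) (F ⁻¹' C) = (νN.prod μ) C :=
  skew_product_invariance_general m ν T hT Pθ htrans h hpos hint Qh hQmeas hQ hfix νN hνN μ hμ F hF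
end
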